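/- arXiv:2309.11025 — 5 statements merged into one kernel-verified Lean document; each statement's English description precedes it below -/
import Mathlib

section
/- Let ψ : ℝ → ℝ be measurable with ψ(t) > 0 for all t, let φ : ℝ → ℝ be a measurable probability density on ℝ (φ ≥ 0 and ∫_ℝ φ = 1) with cumulative distribution function Φ(x) = ∫_{-∞}^x φ(y) dy, and let γ > 0. Define η(y,y) = ∫_0^y ψ(t)^{-2} dt for y > 0, η(y,y) = ∫_y^0 ψ(t)^{-2} dt for y < 0, and η(0,0) = 0, and set K(y,y) = 1 + γ·η(y,y). Then ∫_ℝ K(y,y) φ(y) dy < ∞ if and only if C₁ := ∫_{-∞}^0 Φ(t)/ψ(t)² dt + ∫_0^∞ (1−Φ(t))/ψ(t)² dt < ∞. -/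
open MeasureTheory Set ENNReal

/-- Theorem 2.1: the RKHS built from weight `ψ` and density `φ` is well defined
(`∫ K(y,y) φ(y) dy < ∞`) iff `C₁ < ∞`. -/
theorem stmt0 (ψ φ : ℝ → ℝ) (γ : ℝ) (hγ : 0 < γ)
    (hψm : Measurable ψ) (hψpos : ∀ t, 0 < ψ t)
    (hφm : Measurable φ) (hφ0 : ∀ y, 0 ≤ φ y) (hφ1 : ∫ y, φ y = 1)
    (Φ : ℝ → ℝ) (hΦ : ∀ x, Φ x = ∫ y in Iic x, φ y)
    (η : ℝ → ℝ≥0∞)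
    (hηpos : ∀ y : ℝ, 0 < y → η y = ∫⁻ t in Ioc (0:ℝ) y, ENNReal.ofReal ((ψ t ^ 2)⁻¹))
    (hηneg : ∀ y : ℝ, y < 0 → η y = ∫⁻ t in Ico y (0:ℝ), ENNReal.ofReal ((ψ t ^ 2)⁻¹))
    (hη0 : η 0 = 0)
    (K : ℝ → ℝ≥0∞) (hK : ∀ y, K y = 1 + ENNReal.ofReal γ * η y) :
    (∫⁻ y, K y * ENNReal.ofReal (φ y)) < ⊤ ↔
      (∫⁻ t in Iic (0:ℝ), ENNReal.ofReal (Φ t / ψ t ^ 2)) +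
        (∫⁻ t in Ioi (0:ℝ), ENNReal.ofReal ((1 - Φ t) / ψ t ^ 2)) < ⊤ := by
  classical
  set g : ℝ → ℝ≥0∞ := fun t => ENNReal.ofReal ((ψ t ^ 2)⁻¹) with hg
  set fφ : ℝ → ℝ≥0∞ := fun y => ENNReal.ofReal (φ y) with hfφ
  have hgm : Measurable g := ((hψm.pow_const 2).inv).ennreal_ofReal
  have hfm : Measurable fφ := hφm.ennreal_ofReal
  have hint : Integrable φ := by
    by_contra h
    rw [integral_undef h] at hφ1
    norm_num at hφ1
  have htot : (∫⁻ y, fφ y) = 1 := by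
    rw [← ofReal_integral_eq_lintegral_ofReal hint (ae_of_all _ hφ0), hφ1,
      ENNReal.ofReal_one]
  have hΦnn : ∀ t, 0 ≤ Φ t := fun t => by
    rw [hΦ]; exact integral_nonneg hφ0
  have hΦle : ∀ t, Φ t ≤ 1 := fun t => by
    rw [hΦ, ← hφ1]
    exact setIntegral_le_integral hint (ae_of_all _ hφ0)
  have hIic : ∀ t, (∫⁻ y in Iic t, fφ y) = ENNReal.ofReal (Φ t) := fun t => by
    rw [hΦ, ofReal_integral_eq_lintegral_ofReal hint.restrict (ae_of_all _ hφ0)]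
  have hIci : ∀ t, (∫⁻ y in Ici t, fφ y) = ENNReal.ofReal (1 - Φ t) := by
    intro t
    have hsplit := lintegral_add_compl (μ := volume) fφ
      (measurableSet_Iic : MeasurableSet (Iic t))
    rw [compl_Iic, htot] at hsplit
    have h1 : (∫⁻ y in Ici t, fφ y) = ∫⁻ y in Ioi t, fφ y :=
      (setLIntegral_congr (Ioi_ae_eq_Ici (a := t))).symm
    have h2 : (∫⁻ y in Ioi t, fφ y) = 1 - ENNReal.ofReal (Φ t) := by
      rw [hIic t] at hsplit
      exact ENNReal.eq_sub_of_add_eq ENNReal.ofReal_ne_top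
        (by rw [add_comm]; exact hsplit)
    rw [h1, h2, ← ENNReal.ofReal_one, ← ENNReal.ofReal_sub _ (hΦnn t)]
  -- two product functions for Tonelli (first coordinate y, second t)
  set Sp : Set (ℝ × ℝ) := {p | 0 < p.2 ∧ p.2 ≤ p.1} with hSp
  set Sn : Set (ℝ × ℝ) := {p | p.1 ≤ p.2 ∧ p.2 < 0} with hSn
  have hSpm : MeasurableSet Sp :=
    (measurableSet_lt measurable_const measurable_snd).inter
      (measurableSet_le measurable_snd measurable_fst)
  have hSnm : MeasurableSet Sn :=
    (measurableSet_le measurable_fst measurable_snd).inter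
      (measurableSet_lt measurable_snd measurable_const)
  set Fp : ℝ × ℝ → ℝ≥0∞ := Sp.indicator (fun p => g p.2 * fφ p.1) with hFpdef
  set Fn : ℝ × ℝ → ℝ≥0∞ := Sn.indicator (fun p => g p.2 * fφ p.1) with hFndef
  have hFpm : Measurable Fp :=
    ((hgm.comp measurable_snd).mul (hfm.comp measurable_fst)).indicator hSpm
  have hFnm : Measurable Fn :=
    ((hgm.comp measurable_snd).mul (hfm.comp measurable_fst)).indicator hSnm
  -- pointwise factorizations
  have hFp1 : ∀ y t, Fp (y, t) = (Ioc 0 y).indicator g t * fφ y := by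
    intro y t
    by_cases h : 0 < t ∧ t ≤ y
    · rw [hFpdef, indicator_of_mem (by exact h : (y, t) ∈ Sp),
        indicator_of_mem (mem_Ioc.2 h)]
    · rw [hFpdef, indicator_of_notMem (by exact h : (y, t) ∉ Sp),
        indicator_of_notMem (fun hc => h (mem_Ioc.1 hc)), zero_mul]
  have hFp2 : ∀ y t, Fp (y, t) = (Ioi (0:ℝ)).indicator g t * (Ici t).indicator fφ y := by
    intro y t
    by_cases h : 0 < t ∧ t ≤ y
    · rw [hFpdef, indicator_of_mem (by exact h : (y, t) ∈ Sp),
        indicator_of_mem (mem_Ioi.2 h.1), indicator_of_mem (mem_Ici.2 h.2)]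
    · rw [hFpdef, indicator_of_notMem (by exact h : (y, t) ∉ Sp)]
      rcases not_and_or.1 h with h1 | h2
      · rw [indicator_of_notMem (fun hc => h1 (mem_Ioi.1 hc)), zero_mul]
      · rw [indicator_of_notMem (fun hc => h2 (mem_Ici.1 hc)), mul_zero]
  have hFn1 : ∀ y t, Fn (y, t) = (Ico y 0).indicator g t * fφ y := by
    intro y t
    by_cases h : y ≤ t ∧ t < 0
    · rw [hFndef, indicator_of_mem (by exact h : (y, t) ∈ Sn),
        indicator_of_mem (mem_Ico.2 h)]
    · rw [hFndef, indicator_of_notMem (by exact h : (y, t) ∉ Sn),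
        indicator_of_notMem (fun hc => h (mem_Ico.1 hc)), zero_mul]
  have hFn2 : ∀ y t, Fn (y, t) = (Iio (0:ℝ)).indicator g t * (Iic t).indicator fφ y := by
    intro y t
    by_cases h : y ≤ t ∧ t < 0
    · rw [hFndef, indicator_of_mem (by exact h : (y, t) ∈ Sn),
        indicator_of_mem (mem_Iio.2 h.2), indicator_of_mem (mem_Iic.2 h.1)]
    · rw [hFndef, indicator_of_notMem (by exact h : (y, t) ∉ Sn)]
      rcases not_and_or.1 h with h1 | h2
      · rw [indicator_of_notMem (fun hc => h1 (mem_Iic.1 hc)), mul_zero]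
      · rw [indicator_of_notMem (fun hc => h2 (mem_Iio.1 hc)), zero_mul]
  -- inner integrals in t (for fixed y)
  have hinnerp : ∀ y, (∫⁻ t, Fp (y, t)) = (Ioi (0:ℝ)).indicator (fun y => η y * fφ y) y := by
    intro y
    by_cases hy : 0 < y
    · rw [indicator_of_mem (mem_Ioi.2 hy), hηpos y hy]
      calc (∫⁻ t, Fp (y, t)) = ∫⁻ t, (Ioc 0 y).indicator g t * fφ y := by
            simp only [hFp1]
        _ = (∫⁻ t, (Ioc 0 y).indicator g t) * fφ y :=
            lintegral_mul_const _ (hgm.indicator measurableSet_Ioc)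
        _ = (∫⁻ t in Ioc 0 y, g t) * fφ y := by
            rw [lintegral_indicator measurableSet_Ioc g]
    · rw [indicator_of_notMem (by simpa using hy)]
      have hz : ∀ t, Fp (y, t) = 0 := by
        intro t
        simp [hFp1 y t, Set.Ioc_eq_empty hy]
      simp only [hz, lintegral_zero]
  have hinnern : ∀ y, (∫⁻ t, Fn (y, t)) = (Iio (0:ℝ)).indicator (fun y => η y * fφ y) y := by
    intro y
    by_cases hy : y < 0
    · rw [indicator_of_mem (mem_Iio.2 hy), hηneg y hy]
      calc (∫⁻ t, Fn (y, t)) = ∫⁻ t, (Ico y 0).indicator g t * fφ y := by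
            simp only [hFn1]
        _ = (∫⁻ t, (Ico y 0).indicator g t) * fφ y :=
            lintegral_mul_const _ (hgm.indicator measurableSet_Ico)
        _ = (∫⁻ t in Ico y 0, g t) * fφ y := by
            rw [lintegral_indicator measurableSet_Ico g]
    · rw [indicator_of_notMem (by simpa using hy)]
      have hz : ∀ t, Fn (y, t) = 0 := by
        intro t
        simp [hFn1 y t, Set.Ico_eq_empty hy]
      simp only [hz, lintegral_zero]
  -- inner integrals in y (for fixed t)
  have hinnerp2 : ∀ t, (∫⁻ y, Fp (y, t)) =
      (Ioi (0:ℝ)).indicator (fun t => g t * ENNReal.ofReal (1 - Φ t)) t := by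
    intro t
    calc (∫⁻ y, Fp (y, t)) = ∫⁻ y, (Ioi (0:ℝ)).indicator g t * (Ici t).indicator fφ y := by
          simp only [hFp2]
      _ = (Ioi (0:ℝ)).indicator g t * ∫⁻ y, (Ici t).indicator fφ y :=
          lintegral_const_mul _ (hfm.indicator measurableSet_Ici)
      _ = (Ioi (0:ℝ)).indicator g t * ENNReal.ofReal (1 - Φ t) := by
          rw [lintegral_indicator measurableSet_Ici fφ, hIci t]
      _ = _ := by
          by_cases ht : t ∈ Ioi (0:ℝ)
          · rw [indicator_of_mem ht, indicator_of_mem ht]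
          · rw [indicator_of_notMem ht, indicator_of_notMem ht, zero_mul]
  have hinnern2 : ∀ t, (∫⁻ y, Fn (y, t)) =
      (Iio (0:ℝ)).indicator (fun t => g t * ENNReal.ofReal (Φ t)) t := by
    intro t
    calc (∫⁻ y, Fn (y, t)) = ∫⁻ y, (Iio (0:ℝ)).indicator g t * (Iic t).indicator fφ y := by
          simp only [hFn2]
      _ = (Iio (0:ℝ)).indicator g t * ∫⁻ y, (Iic t).indicator fφ y :=
          lintegral_const_mul _ (hfm.indicator measurableSet_Iic)
      _ = (Iio (0:ℝ)).indicator g t * ENNReal.ofReal (Φ t) := by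
          rw [lintegral_indicator measurableSet_Iic fφ, hIic t]
      _ = _ := by
          by_cases ht : t ∈ Iio (0:ℝ)
          · rw [indicator_of_mem ht, indicator_of_mem ht]
          · rw [indicator_of_notMem ht, indicator_of_notMem ht, zero_mul]
  -- Tonelli
  have hswap_p : (∫⁻ y, ∫⁻ t, Fp (y, t)) = ∫⁻ t, ∫⁻ y, Fp (y, t) :=
    lintegral_lintegral_swap hFpm.aemeasurable
  have hswap_n : (∫⁻ y, ∫⁻ t, Fn (y, t)) = ∫⁻ t, ∫⁻ y, Fn (y, t) :=
    lintegral_lintegral_swap hFnm.aemeasurable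
  have hposfinal : (∫⁻ y in Ioi (0:ℝ), η y * fφ y)
      = ∫⁻ t in Ioi (0:ℝ), g t * ENNReal.ofReal (1 - Φ t) := by
    rw [← lintegral_indicator measurableSet_Ioi (fun y => η y * fφ y),
      ← lintegral_indicator measurableSet_Ioi (fun t => g t * ENNReal.ofReal (1 - Φ t))]
    calc (∫⁻ y, (Ioi (0:ℝ)).indicator (fun y => η y * fφ y) y)
        = ∫⁻ y, ∫⁻ t, Fp (y, t) := by simp only [hinnerp]
      _ = ∫⁻ t, ∫⁻ y, Fp (y, t) := hswap_p
      _ = _ := by simp only [hinnerp2]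
  have hnegfinal : (∫⁻ y in Iio (0:ℝ), η y * fφ y)
      = ∫⁻ t in Iio (0:ℝ), g t * ENNReal.ofReal (Φ t) := by
    rw [← lintegral_indicator measurableSet_Iio (fun y => η y * fφ y),
      ← lintegral_indicator measurableSet_Iio (fun t => g t * ENNReal.ofReal (Φ t))]
    calc (∫⁻ y, (Iio (0:ℝ)).indicator (fun y => η y * fφ y) y)
        = ∫⁻ y, ∫⁻ t, Fn (y, t) := by simp only [hinnern]
      _ = ∫⁻ t, ∫⁻ y, Fn (y, t) := hswap_n
      _ = _ := by simp only [hinnern2]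
  -- splitting the full integral of η·fφ
  have hsplitη : (∫⁻ y, η y * fφ y) =
      (∫⁻ y in Iio (0:ℝ), η y * fφ y) + ∫⁻ y in Ioi (0:ℝ), η y * fφ y := by
    conv_lhs => rw [← Measure.restrict_univ (μ := volume), ← Iio_union_Ici (a := (0:ℝ)),
      Measure.restrict_union (Iio_disjoint_Ici le_rfl) measurableSet_Ici,
      lintegral_add_measure]
    congr 1
    exact (setLIntegral_congr (Ioi_ae_eq_Ici (a := (0:ℝ)))).symm
  -- rewriting the left-hand side
  have hLHS : (∫⁻ y, K y * fφ y) = 1 + ENNReal.ofReal γ * ∫⁻ y, η y * fφ y := by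
    have hpt : ∀ y, K y * fφ y = fφ y + ENNReal.ofReal γ * (η y * fφ y) := by
      intro y; rw [hK y, add_mul, one_mul, mul_assoc]
    simp only [hpt]
    rw [lintegral_add_left hfm, htot, lintegral_const_mul' _ _ ENNReal.ofReal_ne_top]
  -- rewriting the right-hand side
  have hdivp : ∀ t, ENNReal.ofReal ((1 - Φ t) / ψ t ^ 2) = g t * ENNReal.ofReal (1 - Φ t) := by
    intro t
    rw [div_eq_mul_inv, mul_comm, ENNReal.ofReal_mul (inv_nonneg.2 (sq_nonneg (ψ t)))]
  have hdivn : ∀ t, ENNReal.ofReal (Φ t / ψ t ^ 2) = g t * ENNReal.ofReal (Φ t) := by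
    intro t
    rw [div_eq_mul_inv, mul_comm, ENNReal.ofReal_mul (inv_nonneg.2 (sq_nonneg (ψ t)))]
  have hRn : (∫⁻ t in Iic (0:ℝ), ENNReal.ofReal (Φ t / ψ t ^ 2))
      = ∫⁻ t in Iio (0:ℝ), g t * ENNReal.ofReal (Φ t) := by
    rw [← setLIntegral_congr (Iio_ae_eq_Iic : Iio (0:ℝ) =ᵐ[volume] Iic 0)]
    exact lintegral_congr fun t => hdivn t
  have hRp : (∫⁻ t in Ioi (0:ℝ), ENNReal.ofReal ((1 - Φ t) / ψ t ^ 2))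
      = ∫⁻ t in Ioi (0:ℝ), g t * ENNReal.ofReal (1 - Φ t) :=
    lintegral_congr fun t => hdivp t
  -- conclude
  rw [hLHS, hRn, hRp, ← hnegfinal, ← hposfinal, ← hsplitη]
  have hc0 : (ENNReal.ofReal γ) ≠ 0 := by
    simp [ENNReal.ofReal_eq_zero, not_le, hγ]
  constructor
  · intro h
    have hlt : ENNReal.ofReal γ * (∫⁻ y, η y * fφ y) < ⊤ := lt_of_le_of_lt le_add_self h
    by_contra hcon
    rw [not_lt, top_le_iff] at hcon
    rw [hcon, ENNReal.mul_top hc0] at hlt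
    exact (lt_irrefl _ hlt)
  · intro h
    exact ENNReal.add_lt_top.2 ⟨ENNReal.one_lt_top,
      ENNReal.mul_lt_top ENNReal.ofReal_lt_top h⟩
end

section
/- Let φ : ℝ → ℝ be a continuous, strictly positive probability density on ℝ with cumulative distribution function Φ(x) = ∫_{-∞}^x φ(y) dy (so Φ is a strictly increasing bijection from ℝ onto (0,1) with inverse Φ⁻¹), and let ψ : ℝ → ℝ be measurable with ψ(t) > 0 for all t. Assume C₁ := ∫_{-∞}^0 Φ(t)/ψ(t)² dt + ∫_0^∞ (1−Φ(t))/ψ(t)² dt < ∞. Define θ(x) = ∫_{Φ⁻¹(x)}^0 (Φ(t)−x)/ψ(t)² dt + ∫_{Φ⁻¹(1−x)}^0 (Φ(t)−1+x)/ψ(t)² dt for x ∈ (0,1). Then for every nonzero integer h, the Fourier coefficient θ̂(h) = ∫_0^1 θ(x) exp(−2πihx) dx satisfies θ̂(h) = (1/(π²h²)) ∫_ℝ sin²(πhΦ(t))/ψ(t)² dt. -/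
open MeasureTheory Set intervalIntegral

lemma anti1 (c : ℂ) (hc : c ≠ 0) (u : ℝ) :
    ∫ x in (0:ℝ)..u, ((u : ℂ) - (x:ℝ)) * Complex.exp (c * (x:ℝ)) =
      Complex.exp (c * u) / c ^ 2 - (u : ℂ) / c - 1 / c ^ 2 := by
  have key : ∀ x : ℝ, HasDerivAt (fun y : ℝ => Complex.exp (c * (y:ℝ)) * (((u:ℂ) - (y:ℝ)) / c + 1 / c ^ 2))
      (((u:ℂ) - (x:ℝ)) * Complex.exp (c * (x:ℝ))) x := by
    intro x
    have h1 : HasDerivAt (fun y : ℝ => Complex.exp (c * (y:ℝ))) (c * Complex.exp (c * (x:ℝ))) x := by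
      have h0 : HasDerivAt (fun y : ℝ => c * (y:ℝ)) c x := by
        simpa using (Complex.ofRealCLM.hasDerivAt (x := x)).const_mul c
      simpa [mul_comm] using h0.cexp
    have h2 : HasDerivAt (fun y : ℝ => ((u:ℂ) - (y:ℝ)) / c + 1 / c ^ 2) (-1 / c) x := by
      have : HasDerivAt (fun y : ℝ => ((y:ℝ):ℂ)) 1 x := Complex.ofRealCLM.hasDerivAt
      have h3 : HasDerivAt (fun y : ℝ => ((u:ℂ) - (y:ℝ)) / c) (-1 / c) x := by
        have h4 := ((hasDerivAt_const x (u:ℂ)).sub this).div_const c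
        norm_num at h4
        exact h4
      exact h3.add_const (1 / c ^ 2)
    have := h1.mul h2
    convert this using 1
    · rfl
    · rfl
    field_simp
    ring
  rw [intervalIntegral.integral_eq_sub_of_hasDerivAt (fun x _ => key x)]
  · simp
    field_simp
    ring
  · apply Continuous.intervalIntegrable
    continuity

lemma anti2 (c : ℂ) (hc : c ≠ 0) (a b : ℝ) :
    ∫ x in a..b, ((x:ℝ) - (a:ℝ) : ℂ) * Complex.exp (c * (x:ℝ)) =
      Complex.exp (c * b) * (((b:ℂ) - a) / c - 1 / c ^ 2) + Complex.exp (c * a) / c ^ 2 := by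
  have key : ∀ x : ℝ, HasDerivAt (fun y : ℝ => Complex.exp (c * (y:ℝ)) * (((y:ℝ) - (a:ℝ) : ℂ) / c - 1 / c ^ 2))
      (((x:ℝ) - (a:ℝ) : ℂ) * Complex.exp (c * (x:ℝ))) x := by
    intro x
    have h1 : HasDerivAt (fun y : ℝ => Complex.exp (c * (y:ℝ))) (c * Complex.exp (c * (x:ℝ))) x := by
      have h0 : HasDerivAt (fun y : ℝ => c * (y:ℝ)) c x := by
        simpa using (Complex.ofRealCLM.hasDerivAt (x := x)).const_mul c
      simpa [mul_comm] using h0.cexp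
    have h2 : HasDerivAt (fun y : ℝ => ((y:ℝ) - (a:ℝ) : ℂ) / c - 1 / c ^ 2) (1 / c) x := by
      have hid : HasDerivAt (fun y : ℝ => ((y:ℝ):ℂ)) 1 x := Complex.ofRealCLM.hasDerivAt
      have h3 : HasDerivAt (fun y : ℝ => ((y:ℝ) - (a:ℝ) : ℂ) / c) (1 / c) x := by
        have h4 := (hid.sub_const ((a:ℝ):ℂ)).div_const c
        simpa using h4
      exact h3.sub_const (1 / c ^ 2)
    have := h1.mul h2
    convert this using 1
    · rfl
    · rfl
    field_simp
    ring
  rw [intervalIntegral.integral_eq_sub_of_hasDerivAt (fun x _ => key x)]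
  · simp
    ring
  · apply Continuous.intervalIntegrable
    continuity

lemma core (h : ℤ) (hh : h ≠ 0) (u : ℝ) (hu0 : 0 ≤ u) (hu1 : u ≤ 1) :
    ∫ x in (0:ℝ)..1, ((max (u - x) 0 + max (u - (1 - x)) 0 : ℝ) : ℂ) *
      Complex.exp (-2 * (Real.pi : ℂ) * Complex.I * (h : ℂ) * (x : ℝ)) =
    ((Real.sin (Real.pi * (h : ℝ) * u) ^ 2 / (Real.pi ^ 2 * (h : ℝ) ^ 2) : ℝ) : ℂ) := by
  obtain ⟨c, hcdef⟩ : ∃ c : ℂ, c = -2 * (Real.pi : ℂ) * Complex.I * (h : ℂ) := ⟨_, rfl⟩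
  rw [← hcdef]
  have hhC : (h : ℂ) ≠ 0 := Int.cast_ne_zero.2 hh
  have hπ : (Real.pi : ℂ) ≠ 0 := Complex.ofReal_ne_zero.2 Real.pi_ne_zero
  have hc : c ≠ 0 := by
    rw [hcdef]
    exact mul_ne_zero (mul_ne_zero (mul_ne_zero (by norm_num) hπ) Complex.I_ne_zero) hhC
  have cont1 : Continuous fun x : ℝ => ((max (u - x) 0 : ℝ) : ℂ) * Complex.exp (c * (x:ℝ)) := by
    continuity
  have cont2 : Continuous fun x : ℝ => ((max (u - (1 - x)) 0 : ℝ) : ℂ) * Complex.exp (c * (x:ℝ)) := by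
    continuity
  have hsplit : (∫ x in (0:ℝ)..1, ((max (u - x) 0 + max (u - (1 - x)) 0 : ℝ) : ℂ) *
        Complex.exp (c * (x : ℝ)))
      = (∫ x in (0:ℝ)..1, ((max (u - x) 0 : ℝ) : ℂ) * Complex.exp (c * (x : ℝ)))
        + ∫ x in (0:ℝ)..1, ((max (u - (1 - x)) 0 : ℝ) : ℂ) * Complex.exp (c * (x : ℝ)) := by
    rw [← intervalIntegral.integral_add (cont1.intervalIntegrable _ _) (cont2.intervalIntegrable _ _)]
    congr 1
    ext x
    push_cast
    ring
  have J1 : (∫ x in (0:ℝ)..1, ((max (u - x) 0 : ℝ) : ℂ) * Complex.exp (c * (x : ℝ)))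
      = Complex.exp (c * u) / c ^ 2 - (u : ℂ) / c - 1 / c ^ 2 := by
    rw [← intervalIntegral.integral_add_adjacent_intervals (b := u)
      ((cont1.intervalIntegrable _ _)) ((cont1.intervalIntegrable _ _))]
    have e1 : (∫ x in (0:ℝ)..u, ((max (u - x) 0 : ℝ) : ℂ) * Complex.exp (c * (x : ℝ)))
        = ∫ x in (0:ℝ)..u, ((u : ℂ) - (x:ℝ)) * Complex.exp (c * (x : ℝ)) := by
      apply intervalIntegral.integral_congr
      intro x hx
      rw [uIcc_of_le hu0, mem_Icc] at hx
      dsimp only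
      rw [max_eq_left (by linarith [hx.2] : (0:ℝ) ≤ u - x)]
      push_cast; ring
    have e2 : (∫ x in u..(1:ℝ), ((max (u - x) 0 : ℝ) : ℂ) * Complex.exp (c * (x : ℝ))) = 0 := by
      rw [show (0:ℂ) = ∫ x in u..(1:ℝ), (0:ℂ) by simp]
      apply intervalIntegral.integral_congr
      intro x hx
      rw [uIcc_of_le hu1, mem_Icc] at hx
      dsimp only
      rw [max_eq_right (by linarith [hx.1] : u - x ≤ (0:ℝ))]
      simp
    rw [e1, e2, anti1 c hc u, add_zero]
  have J2 : (∫ x in (0:ℝ)..1, ((max (u - (1 - x)) 0 : ℝ) : ℂ) * Complex.exp (c * (x : ℝ)))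
      = ((u:ℂ)) / c - 1 / c ^ 2 + Complex.exp (-(c * u)) / c ^ 2 := by
    have h1u0 : (0:ℝ) ≤ 1 - u := by linarith
    have h1u1 : (1 - u : ℝ) ≤ 1 := by linarith
    rw [← intervalIntegral.integral_add_adjacent_intervals (b := (1 - u : ℝ))
      ((cont2.intervalIntegrable _ _)) ((cont2.intervalIntegrable _ _))]
    have e1 : (∫ x in (0:ℝ)..(1 - u : ℝ), ((max (u - (1 - x)) 0 : ℝ) : ℂ) * Complex.exp (c * (x : ℝ))) = 0 := by
      rw [show (0:ℂ) = ∫ x in (0:ℝ)..(1 - u : ℝ), (0:ℂ) by simp]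
      apply intervalIntegral.integral_congr
      intro x hx
      rw [uIcc_of_le h1u0, mem_Icc] at hx
      dsimp only
      rw [max_eq_right (by linarith [hx.2] : u - (1 - x) ≤ (0:ℝ))]
      simp
    have e2 : (∫ x in (1 - u : ℝ)..(1:ℝ), ((max (u - (1 - x)) 0 : ℝ) : ℂ) * Complex.exp (c * (x : ℝ)))
        = ∫ x in (1 - u : ℝ)..(1:ℝ), ((x:ℝ) - ((1 - u : ℝ)) : ℂ) * Complex.exp (c * (x : ℝ)) := by
      apply intervalIntegral.integral_congr
      intro x hx
      rw [uIcc_of_le h1u1, mem_Icc] at hx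
      dsimp only
      rw [max_eq_left (by linarith [hx.1] : (0:ℝ) ≤ u - (1 - x))]
      push_cast; ring
    rw [e1, e2, anti2 c hc (1 - u : ℝ) 1, zero_add]
    have hexpc : Complex.exp (c * ((1:ℝ):ℂ)) = 1 := by
      rw [hcdef, show (-2 * (Real.pi : ℂ) * Complex.I * (h : ℂ)) * ((1:ℝ):ℂ)
        = ((-h : ℤ) : ℂ) * (2 * (Real.pi:ℂ) * Complex.I) by push_cast; ring]
      exact Complex.exp_int_mul_two_pi_mul_I (-h)
    have hexp1u : Complex.exp (c * (((1 - u : ℝ)):ℂ)) = Complex.exp (-(c * u)) := by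
      rw [show c * (((1 - u : ℝ)):ℂ) = c * ((1:ℝ):ℂ) + -(c * (u:ℝ)) by push_cast; ring,
        Complex.exp_add, hexpc, one_mul]
    rw [hexpc, hexp1u]
    push_cast
    field_simp
    ring
  rw [hsplit, J1, J2]
  have collect : Complex.exp (c * u) / c ^ 2 - (u : ℂ) / c - 1 / c ^ 2
      + ((u:ℂ) / c - 1 / c ^ 2 + Complex.exp (-(c * u)) / c ^ 2)
      = (Complex.exp (c * u) + Complex.exp (-(c * u)) - 2) / c ^ 2 := by
    have key : ∀ a b : ℂ, a / c ^ 2 - (u:ℂ) / c - 1 / c ^ 2 + ((u:ℂ) / c - 1 / c ^ 2 + b / c ^ 2)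
        = (a + b - 2) / c ^ 2 := by
      intro a b
      rw [eq_div_iff (pow_ne_zero 2 hc)]
      field_simp
      ring
    exact key _ _
  rw [collect]
  obtain ⟨θ, hθ⟩ : ∃ θ : ℝ, θ = 2 * Real.pi * (h:ℝ) * u := ⟨_, rfl⟩
  have hcu : c * (u:ℝ) = ((-θ : ℝ) : ℂ) * Complex.I := by
    rw [hcdef, hθ]; push_cast; ring
  have hcos : Complex.exp (c * u) + Complex.exp (-(c * u)) = ((2 * Real.cos θ : ℝ) : ℂ) := by
    rw [hcu, ← neg_mul, Complex.exp_mul_I, Complex.exp_mul_I]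
    rw [show (-((-θ:ℝ):ℂ)) = ((θ:ℝ):ℂ) by push_cast; ring]
    rw [show ((-θ:ℝ):ℂ) = -((θ:ℝ):ℂ) by push_cast; ring]
    rw [Complex.cos_neg, Complex.sin_neg, ← Complex.ofReal_cos, ← Complex.ofReal_sin]
    push_cast
    ring
  have hc2 : c ^ 2 = ((-(4 * Real.pi ^ 2 * (h:ℝ) ^ 2) : ℝ) : ℂ) := by
    rw [hcdef]
    rw [show (-2 * (Real.pi : ℂ) * Complex.I * (h : ℂ)) ^ 2
      = 4 * (Real.pi : ℂ) ^ 2 * (h : ℂ) ^ 2 * Complex.I ^ 2 by ring, Complex.I_sq]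
    push_cast; ring
  rw [hcos, hc2]
  rw [show ((2 * Real.cos θ : ℝ) : ℂ) - 2 = ((2 * Real.cos θ - 2 : ℝ) : ℂ) by push_cast; ring]
  rw [← Complex.ofReal_div]
  congr 1
  have hπh : Real.pi ^ 2 * (h:ℝ) ^ 2 ≠ 0 := by
    have : (h:ℝ) ≠ 0 := Int.cast_ne_zero.2 hh
    positivity
  have hs : Real.sin (Real.pi * (h:ℝ) * u) ^ 2
      = 1 / 2 - Real.cos (2 * (Real.pi * (h:ℝ) * u)) / 2 := by
    rw [Real.sin_sq, Real.cos_sq]; ring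
  rw [hθ, show 2 * Real.pi * (h:ℝ) * u = 2 * (Real.pi * (h:ℝ) * u) by ring, hs]
  field_simp
  ring

/-- The integrand of `θ` as a function on the whole line. -/
noncomputable def Gfun (Φ ψ : ℝ → ℝ) (x t : ℝ) : ℝ :=
  if t ≤ 0 then (max (Φ t - x) 0 + max (Φ t - (1 - x)) 0) / ψ t ^ 2
  else (max (x - Φ t) 0 + max ((1 - x) - Φ t) 0) / ψ t ^ 2

/-- Closed form of the Fourier coefficient `θ̂(h)` of the shift-invariant kernel
(Appendix of the paper). -/
theorem stmt1 (φ ψ : ℝ → ℝ)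
    (hφc : Continuous φ) (hφpos : ∀ x, 0 < φ x) (hφ1 : ∫ x, φ x = 1)
    (Φ : ℝ → ℝ) (hΦ : ∀ x, Φ x = ∫ y in Iic x, φ y)
    (Φinv : ℝ → ℝ)
    (hinv1 : ∀ u ∈ Ioo (0:ℝ) 1, Φ (Φinv u) = u)
    (hinv2 : ∀ t : ℝ, Φinv (Φ t) = t)
    (hψm : Measurable ψ) (hψpos : ∀ t, 0 < ψ t)
    (hC1a : IntegrableOn (fun t => Φ t / ψ t ^ 2) (Iic 0))
    (hC1b : IntegrableOn (fun t => (1 - Φ t) / ψ t ^ 2) (Ioi 0))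
    (θ : ℝ → ℝ)
    (hθ : ∀ x ∈ Ioo (0:ℝ) 1, θ x =
      (∫ t in Φinv x..0, (Φ t - x) / ψ t ^ 2) +
      (∫ t in Φinv (1 - x)..0, (Φ t - (1 - x)) / ψ t ^ 2))
    (h : ℤ) (hh : h ≠ 0) :
    (∫ x in (0:ℝ)..1, (θ x : ℂ) *
        Complex.exp (-2 * (Real.pi : ℂ) * Complex.I * (h : ℂ) * (x : ℂ))) =
      ((1 / (Real.pi ^ 2 * (h : ℝ) ^ 2) *
        ∫ t : ℝ, Real.sin (Real.pi * (h : ℝ) * Φ t) ^ 2 / ψ t ^ 2 : ℝ) : ℂ) := by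
  -- basic facts about φ and Φ
  have hφint : Integrable φ := by
    by_contra hni
    rw [MeasureTheory.integral_undef hni] at hφ1
    norm_num at hφ1
  have hφnn : ∀ y, (0:ℝ) ≤ φ y := fun y => (hφpos y).le
  have hmono : StrictMono Φ := by
    intro s t hst
    have hpos : 0 < ∫ y in s..t, φ y :=
      intervalIntegral.intervalIntegral_pos_of_pos_on (hφint.intervalIntegrable)
        (fun y _ => hφpos y) hst
    have hd : Φ t - Φ s = ∫ y in s..t, φ y := by
      rw [hΦ, hΦ, intervalIntegral.integral_Iic_sub_Iic hφint.integrableOn hφint.integrableOn]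
    linarith
  have hmonoW : Monotone Φ := hmono.monotone
  have hΦmeas : Measurable Φ := hmonoW.measurable
  have hΦpos : ∀ t, 0 < Φ t := by
    intro t
    have h1 : (0:ℝ) ≤ Φ (t - 1) := by
      rw [hΦ]; exact setIntegral_nonneg measurableSet_Iic fun y _ => hφnn y
    have h2 := hmono (show t - 1 < t by linarith)
    linarith
  have hΦlt1 : ∀ t, Φ t < 1 := by
    intro t
    have hsum : Φ t + ∫ y in Ioi t, φ y = 1 := by
      rw [hΦ, intervalIntegral.integral_Iic_add_Ioi hφint.integrableOn hφint.integrableOn]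
      exact hφ1
    have hsub : (0:ℝ) < ∫ y in t..(t+1), φ y :=
      intervalIntegral.intervalIntegral_pos_of_pos_on (hφint.intervalIntegrable)
        (fun y _ => hφpos y) (by linarith)
    have hmonoset : (∫ y in Ioc t (t+1), φ y) ≤ ∫ y in Ioi t, φ y :=
      setIntegral_mono_set hφint.integrableOn (Filter.Eventually.of_forall hφnn)
        (HasSubset.Subset.eventuallyLE (fun y hy => hy.1))
    rw [intervalIntegral.integral_of_le (by linarith)] at hsub
    linarith
  have hψ2 : ∀ t, (0:ℝ) < ψ t ^ 2 := fun t => pow_pos (hψpos t) 2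
  -- integrability of the positive-part integrands
  have hIa : ∀ x : ℝ, 0 ≤ x → IntegrableOn (fun t => max (Φ t - x) 0 / ψ t ^ 2) (Iic 0) := by
    intro x hx
    apply hC1a.mono'
    · exact (((hΦmeas.sub measurable_const).max measurable_const).div
        (hψm.pow_const 2)).aestronglyMeasurable
    · apply Filter.Eventually.of_forall
      intro t
      rw [Real.norm_eq_abs, abs_div, abs_of_nonneg (le_max_right _ _),
        abs_of_nonneg (sq_nonneg _)]
      exact (div_le_div_iff_of_pos_right (hψ2 t)).2 (max_le (by linarith [hΦpos t]) (hΦpos t).le)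
  have hIb : ∀ x : ℝ, x ≤ 1 → IntegrableOn (fun t => max (x - Φ t) 0 / ψ t ^ 2) (Ioi 0) := by
    intro x hx
    apply hC1b.mono'
    · exact (((measurable_const.sub hΦmeas).max measurable_const).div
        (hψm.pow_const 2)).aestronglyMeasurable
    · apply Filter.Eventually.of_forall
      intro t
      rw [Real.norm_eq_abs, abs_div, abs_of_nonneg (le_max_right _ _),
        abs_of_nonneg (sq_nonneg _)]
      exact (div_le_div_iff_of_pos_right (hψ2 t)).2
        (max_le (by linarith [hΦlt1 t]) (by linarith [hΦlt1 t]))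
  -- the key rewriting of each interval integral
  have term : ∀ x ∈ Ioo (0:ℝ) 1, (∫ t in Φinv x..0, (Φ t - x) / ψ t ^ 2)
      = (∫ t in Iic 0, max (Φ t - x) 0 / ψ t ^ 2)
        + ∫ t in Ioi 0, max (x - Φ t) 0 / ψ t ^ 2 := by
    intro x hx
    have hax : Φ (Φinv x) = x := hinv1 x hx
    rcases le_or_gt (Φinv x) 0 with ha | ha
    · have h1 : (∫ t in Ioi (0:ℝ), max (x - Φ t) 0 / ψ t ^ 2) = 0 := by
        apply setIntegral_eq_zero_of_forall_eq_zero
        intro t ht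
        have h5 : Φ (Φinv x) ≤ Φ t := hmonoW (le_trans ha (le_of_lt ht))
        rw [hax] at h5
        rw [max_eq_right (by linarith), zero_div]
      have h2 : (∫ t in Iic (0:ℝ), max (Φ t - x) 0 / ψ t ^ 2)
          = ∫ t in Ioc (Φinv x) 0, max (Φ t - x) 0 / ψ t ^ 2 := by
        rw [← Set.Iic_union_Ioc_eq_Iic ha,
          setIntegral_union (Set.Iic_disjoint_Ioc le_rfl) measurableSet_Ioc
            ((hIa x hx.1.le).mono_set (Set.Iic_subset_Iic.2 ha))
            ((hIa x hx.1.le).mono_set Set.Ioc_subset_Iic_self)]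
        rw [setIntegral_eq_zero_of_forall_eq_zero, zero_add]
        intro t ht
        have h5 : Φ t ≤ Φ (Φinv x) := hmonoW ht
        rw [hax] at h5
        rw [max_eq_right (by linarith), zero_div]
      rw [h1, add_zero, h2, intervalIntegral.integral_of_le ha]
      apply (setIntegral_congr_fun measurableSet_Ioc ?_).symm
      intro t ht
      have h5 : Φ (Φinv x) ≤ Φ t := hmonoW ht.1.le
      rw [hax] at h5
      dsimp only
      rw [max_eq_left (by linarith)]
    · have h1 : (∫ t in Iic (0:ℝ), max (Φ t - x) 0 / ψ t ^ 2) = 0 := by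
        apply setIntegral_eq_zero_of_forall_eq_zero
        intro t ht
        have h5 : Φ t < Φ (Φinv x) := lt_of_le_of_lt (hmonoW ht) (hmono ha)
        rw [hax] at h5
        rw [max_eq_right (by linarith), zero_div]
      have h2 : (∫ t in Ioi (0:ℝ), max (x - Φ t) 0 / ψ t ^ 2)
          = ∫ t in Ioc 0 (Φinv x), max (x - Φ t) 0 / ψ t ^ 2 := by
        rw [← Set.Ioc_union_Ioi_eq_Ioi ha.le,
          setIntegral_union (Set.Ioc_disjoint_Ioi le_rfl) measurableSet_Ioi
            ((hIb x hx.2.le).mono_set Set.Ioc_subset_Ioi_self)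
            ((hIb x hx.2.le).mono_set (Set.Ioi_subset_Ioi ha.le))]
        rw [setIntegral_eq_zero_of_forall_eq_zero (t := Ioi (Φinv x)), add_zero]
        intro t ht
        have h5 : Φ (Φinv x) ≤ Φ t := hmonoW (le_of_lt ht)
        rw [hax] at h5
        rw [max_eq_right (by linarith), zero_div]
      have h3 : (∫ t in Ioc 0 (Φinv x), max (x - Φ t) 0 / ψ t ^ 2)
          = ∫ t in Ioc 0 (Φinv x), (x - Φ t) / ψ t ^ 2 := by
        apply setIntegral_congr_fun measurableSet_Ioc
        intro t ht
        have h5 : Φ t ≤ Φ (Φinv x) := hmonoW ht.2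
        rw [hax] at h5
        dsimp only
        rw [max_eq_left (by linarith)]
      rw [h1, zero_add, h2, h3, intervalIntegral.integral_symm,
        intervalIntegral.integral_of_le ha.le, ← MeasureTheory.integral_neg]
      apply setIntegral_congr_fun measurableSet_Ioc
      intro t _
      dsimp only
      ring
  -- combined integrability on each half line
  have hIsum1 : ∀ x ∈ Ioo (0:ℝ) 1,
      IntegrableOn (fun t => (max (Φ t - x) 0 + max (Φ t - (1 - x)) 0) / ψ t ^ 2) (Iic 0) := by
    intro x hx
    refine ((hIa x hx.1.le).add (hIa (1 - x) (by linarith [hx.2]))).congr ?_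
    exact Filter.Eventually.of_forall fun t => by
      simp only [Pi.add_apply]; ring
  have hIsum2 : ∀ x ∈ Ioo (0:ℝ) 1,
      IntegrableOn (fun t => (max (x - Φ t) 0 + max ((1 - x) - Φ t) 0) / ψ t ^ 2) (Ioi 0) := by
    intro x hx
    refine ((hIb x hx.2.le).add (hIb (1 - x) (by linarith [hx.1]))).congr ?_
    exact Filter.Eventually.of_forall fun t => by
      simp only [Pi.add_apply]; ring
  -- θ as a full-line integral of Gfun
  have hGa : ∀ x ∈ Ioo (0:ℝ) 1, IntegrableOn (Gfun Φ ψ x) (Iic 0) := by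
    intro x hx
    refine (hIsum1 x hx).congr_fun ?_ measurableSet_Iic
    intro t ht
    simp [Gfun, if_pos (mem_Iic.1 ht)]
  have hGb : ∀ x ∈ Ioo (0:ℝ) 1, IntegrableOn (Gfun Φ ψ x) (Ioi 0) := by
    intro x hx
    refine (hIsum2 x hx).congr_fun ?_ measurableSet_Ioi
    intro t ht
    simp [Gfun, if_neg (not_le.2 (mem_Ioi.1 ht))]
  have hθfull : ∀ x ∈ Ioo (0:ℝ) 1, θ x = ∫ t : ℝ, Gfun Φ ψ x t := by
    intro x hx
    have hx' : 1 - x ∈ Ioo (0:ℝ) 1 := ⟨by linarith [hx.2], by linarith [hx.1]⟩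
    have e1 : (∫ t in Iic (0:ℝ), Gfun Φ ψ x t)
        = ∫ t in Iic 0, (max (Φ t - x) 0 + max (Φ t - (1 - x)) 0) / ψ t ^ 2 :=
      setIntegral_congr_fun measurableSet_Iic fun t ht => by
        simp [Gfun, if_pos (mem_Iic.1 ht)]
    have e2 : (∫ t in Ioi (0:ℝ), Gfun Φ ψ x t)
        = ∫ t in Ioi 0, (max (x - Φ t) 0 + max ((1 - x) - Φ t) 0) / ψ t ^ 2 :=
      setIntegral_congr_fun measurableSet_Ioi fun t ht => by
        simp [Gfun, if_neg (not_le.2 (mem_Ioi.1 ht))]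
    rw [hθ x hx, term x hx, term (1 - x) hx',
      ← intervalIntegral.integral_Iic_add_Ioi (hGa x hx) (hGb x hx), e1, e2]
    have c1 : (∫ t in Iic (0:ℝ), (max (Φ t - x) 0 + max (Φ t - (1 - x)) 0) / ψ t ^ 2)
        = (∫ t in Iic 0, max (Φ t - x) 0 / ψ t ^ 2)
          + ∫ t in Iic 0, max (Φ t - (1 - x)) 0 / ψ t ^ 2 := by
      rw [← MeasureTheory.integral_add (hIa x hx.1.le) (hIa (1 - x) hx'.1.le)]
      refine setIntegral_congr_fun measurableSet_Iic fun t _ => ?_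
      first
      | (simp only [Pi.add_apply]; ring)
      | ring
    have c2 : (∫ t in Ioi (0:ℝ), (max (x - Φ t) 0 + max ((1 - x) - Φ t) 0) / ψ t ^ 2)
        = (∫ t in Ioi 0, max (x - Φ t) 0 / ψ t ^ 2)
          + ∫ t in Ioi 0, max ((1 - x) - Φ t) 0 / ψ t ^ 2 := by
      rw [← MeasureTheory.integral_add (hIb x hx.2.le) (hIb (1 - x) hx'.2.le)]
      refine setIntegral_congr_fun measurableSet_Ioi fun t _ => ?_
      first
      | (simp only [Pi.add_apply]; ring)
      | ring
    rw [c1, c2]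
    ring
  -- norm of the exponential factor
  have hnormE : ∀ x : ℝ, ‖Complex.exp (-2 * (Real.pi : ℂ) * Complex.I * (h : ℂ) * (x:ℝ))‖ = 1 := by
    intro x
    rw [show (-2 * (Real.pi : ℂ) * Complex.I * (h : ℂ) * (x:ℝ))
      = ((-2 * Real.pi * (h:ℝ) * x : ℝ) : ℂ) * Complex.I by push_cast; ring]
    exact Complex.norm_exp_ofReal_mul_I _
  -- integrable bound on the line
  have hbndmeas : Measurable (fun t : ℝ => if t ≤ 0 then 2 * (Φ t / ψ t ^ 2)
      else 2 * ((1 - Φ t) / ψ t ^ 2)) := by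
    apply Measurable.ite (measurableSet_le measurable_id measurable_const)
    · exact (hΦmeas.div (hψm.pow_const 2)).const_mul 2
    · exact ((measurable_const.sub hΦmeas).div (hψm.pow_const 2)).const_mul 2
  have hbnd : Integrable (fun t : ℝ => if t ≤ 0 then 2 * (Φ t / ψ t ^ 2)
      else 2 * ((1 - Φ t) / ψ t ^ 2)) := by
    rw [← integrableOn_univ, ← Set.Iic_union_Ioi (a := (0:ℝ))]
    apply IntegrableOn.union
    · exact IntegrableOn.congr_fun (hC1a.const_mul 2)
        (fun t ht => by simp [if_pos (mem_Iic.1 ht)]) measurableSet_Iic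
    · exact IntegrableOn.congr_fun (hC1b.const_mul 2)
        (fun t ht => by simp [if_neg (not_le.2 (mem_Ioi.1 ht))]) measurableSet_Ioi
  -- joint measurability
  have hGmeas : Measurable (fun p : ℝ × ℝ => Gfun Φ ψ p.1 p.2) := by
    unfold Gfun
    apply Measurable.ite (measurableSet_le measurable_snd measurable_const)
    · exact ((((hΦmeas.comp measurable_snd).sub measurable_fst).max measurable_const).add
        (((hΦmeas.comp measurable_snd).sub (measurable_const.sub measurable_fst)).max
          measurable_const)).div ((hψm.comp measurable_snd).pow_const 2)
    · exact (((measurable_fst.sub (hΦmeas.comp measurable_snd)).max measurable_const).add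
        (((measurable_const.sub measurable_fst).sub (hΦmeas.comp measurable_snd)).max
          measurable_const)).div ((hψm.comp measurable_snd).pow_const 2)
  have hFmeas : AEStronglyMeasurable (Function.uncurry fun x t : ℝ => (Gfun Φ ψ x t : ℂ) *
      Complex.exp (-2 * (Real.pi : ℂ) * Complex.I * (h : ℂ) * (x:ℝ)))
      ((volume.restrict (Ioc (0:ℝ) 1)).prod volume) := by
    apply Measurable.aestronglyMeasurable
    have : (Function.uncurry fun x t : ℝ => (Gfun Φ ψ x t : ℂ) *
        Complex.exp (-2 * (Real.pi : ℂ) * Complex.I * (h : ℂ) * (x:ℝ)))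
        = fun p : ℝ × ℝ => (Gfun Φ ψ p.1 p.2 : ℂ) *
        Complex.exp (-2 * (Real.pi : ℂ) * Complex.I * (h : ℂ) * ((p.1 : ℝ) : ℂ)) := rfl
    rw [this]
    exact (Complex.measurable_ofReal.comp hGmeas).mul
      ((Complex.continuous_exp.comp (continuous_const.mul
        (Complex.continuous_ofReal.comp continuous_fst))).measurable)
  -- integrability of the bound on the product space
  have hbnd2 : Integrable (fun p : ℝ × ℝ => if p.2 ≤ 0 then 2 * (Φ p.2 / ψ p.2 ^ 2)
      else 2 * ((1 - Φ p.2) / ψ p.2 ^ 2)) ((volume.restrict (Ioc (0:ℝ) 1)).prod volume) := by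
    have hbnd' : Integrable (fun t : ℝ => if t ≤ 0 then 2 * (Φ t / ψ t ^ 2)
        else 2 * ((1 - Φ t) / ψ t ^ 2))
        (((volume.restrict (Ioc (0:ℝ) 1)).prod (volume : Measure ℝ)).map Prod.snd) := by
      rw [Measure.map_snd_prod]
      apply hbnd.smul_measure
      simp [Real.volume_Ioc]
    exact (integrable_map_measure hbndmeas.aestronglyMeasurable
      measurable_snd.aemeasurable).1 hbnd'
  -- product integrability
  have hFint : Integrable (Function.uncurry fun x t : ℝ => (Gfun Φ ψ x t : ℂ) *
      Complex.exp (-2 * (Real.pi : ℂ) * Complex.I * (h : ℂ) * (x:ℝ)))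
      ((volume.restrict (Ioc (0:ℝ) 1)).prod volume) := by
    apply Integrable.mono' hbnd2 hFmeas
    have hps : (volume.restrict (Ioc (0:ℝ) 1)).prod (volume : Measure ℝ)
        = ((volume : Measure ℝ).prod volume).restrict ((Ioc (0:ℝ) 1) ×ˢ Set.univ) := by
      rw [← Measure.prod_restrict, Measure.restrict_univ]
    rw [hps]
    filter_upwards [ae_restrict_mem (measurableSet_Ioc.prod MeasurableSet.univ)] with p hp
    obtain ⟨hp1, -⟩ := hp
    show ‖(Gfun Φ ψ p.1 p.2 : ℂ) *
      Complex.exp (-2 * (Real.pi : ℂ) * Complex.I * (h : ℂ) * ((p.1:ℝ):ℂ))‖ ≤ _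
    rw [norm_mul, hnormE p.1, mul_one, Complex.norm_real, Real.norm_eq_abs]
    by_cases ht : p.2 ≤ 0
    · simp only [Gfun, if_pos ht]
      rw [abs_div, abs_of_nonneg (add_nonneg (le_max_right _ _) (le_max_right _ _)),
        abs_of_nonneg (sq_nonneg _),
        show 2 * (Φ p.2 / ψ p.2 ^ 2) = (2 * Φ p.2) / ψ p.2 ^ 2 by ring]
      apply (div_le_div_iff_of_pos_right (hψ2 _)).2
      have h1 : max (Φ p.2 - p.1) 0 ≤ Φ p.2 := max_le (by linarith [hp1.1]) (hΦpos _).le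
      have h2 : max (Φ p.2 - (1 - p.1)) 0 ≤ Φ p.2 := max_le (by linarith [hp1.2]) (hΦpos _).le
      linarith
    · simp only [Gfun, if_neg ht]
      rw [abs_div, abs_of_nonneg (add_nonneg (le_max_right _ _) (le_max_right _ _)),
        abs_of_nonneg (sq_nonneg _),
        show 2 * ((1 - Φ p.2) / ψ p.2 ^ 2) = (2 * (1 - Φ p.2)) / ψ p.2 ^ 2 by ring]
      apply (div_le_div_iff_of_pos_right (hψ2 _)).2
      have h1 : max (p.1 - Φ p.2) 0 ≤ 1 - Φ p.2 :=
        max_le (by linarith [hp1.2]) (by linarith [hΦlt1 p.2])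
      have h2 : max ((1 - p.1) - Φ p.2) 0 ≤ 1 - Φ p.2 :=
        max_le (by linarith [hp1.1]) (by linarith [hΦlt1 p.2])
      linarith
  -- auxiliary real facts
  have hhr : ((h:ℝ)) ≠ 0 := Int.cast_ne_zero.2 hh
  -- evaluation of the inner integral
  have inner : ∀ t : ℝ, (∫ x in Ioc (0:ℝ) 1, (Gfun Φ ψ x t : ℂ) *
        Complex.exp (-2 * (Real.pi : ℂ) * Complex.I * (h : ℂ) * (x:ℝ)))
      = ((1 / (Real.pi ^ 2 * (h:ℝ) ^ 2) * (Real.sin (Real.pi * (h:ℝ) * Φ t) ^ 2 / ψ t ^ 2) : ℝ) : ℂ) := by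
    intro t
    have hψne : ψ t ≠ 0 := (hψpos t).ne'
    have hcoeff : ∀ s : ℝ, (((ψ t ^ 2 : ℝ) : ℂ))⁻¹ * ((s / (Real.pi ^ 2 * (h:ℝ) ^ 2) : ℝ) : ℂ)
        = ((1 / (Real.pi ^ 2 * (h:ℝ) ^ 2) * (s / ψ t ^ 2) : ℝ) : ℂ) := by
      intro s
      rw [← Complex.ofReal_inv, ← Complex.ofReal_mul]
      congr 1
      field_simp [hψne, Real.pi_ne_zero, hhr]
    rw [← intervalIntegral.integral_of_le zero_le_one]
    by_cases ht : t ≤ 0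
    · have e : (fun x : ℝ => (Gfun Φ ψ x t : ℂ) *
          Complex.exp (-2 * (Real.pi : ℂ) * Complex.I * (h:ℂ) * (x:ℝ)))
          = fun x : ℝ => (((ψ t ^ 2 : ℝ) : ℂ))⁻¹ *
            (((max (Φ t - x) 0 + max (Φ t - (1 - x)) 0 : ℝ) : ℂ) *
              Complex.exp (-2 * (Real.pi : ℂ) * Complex.I * (h:ℂ) * (x:ℝ))) := by
        funext x
        simp only [Gfun, if_pos ht]
        push_cast
        ring
      rw [e, intervalIntegral.integral_const_mul, core h hh (Φ t) (hΦpos t).le (hΦlt1 t).le,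
        hcoeff]
    · have e : (fun x : ℝ => (Gfun Φ ψ x t : ℂ) *
          Complex.exp (-2 * (Real.pi : ℂ) * Complex.I * (h:ℂ) * (x:ℝ)))
          = fun x : ℝ => (((ψ t ^ 2 : ℝ) : ℂ))⁻¹ *
            (((max ((1 - Φ t) - x) 0 + max ((1 - Φ t) - (1 - x)) 0 : ℝ) : ℂ) *
              Complex.exp (-2 * (Real.pi : ℂ) * Complex.I * (h:ℂ) * (x:ℝ))) := by
        funext x
        simp only [Gfun, if_neg ht]
        rw [show max (x - Φ t) 0 + max ((1 - x) - Φ t) 0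
            = max ((1 - Φ t) - x) 0 + max ((1 - Φ t) - (1 - x)) 0 by
          rw [show (1 - Φ t) - (1 - x) = x - Φ t by ring,
            show (1 - Φ t) - x = (1 - x) - Φ t by ring]
          ring]
        push_cast
        ring
      rw [e, intervalIntegral.integral_const_mul,
        core h hh (1 - Φ t) (by linarith [hΦlt1 t]) (by linarith [hΦpos t])]
      have hsin : Real.sin (Real.pi * (h:ℝ) * (1 - Φ t)) ^ 2
          = Real.sin (Real.pi * (h:ℝ) * Φ t) ^ 2 := by
        have hsq : ∀ y : ℝ, Real.sin y ^ 2 = 1/2 - Real.cos (2*y)/2 := fun y => by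
          rw [Real.sin_sq, Real.cos_sq]; ring
        rw [hsq, hsq, show 2*(Real.pi * (h:ℝ) * (1 - Φ t))
            = (h:ℝ)*(2*Real.pi) - 2*(Real.pi*(h:ℝ)*Φ t) by ring,
          Real.cos_int_mul_two_pi_sub]
      rw [hsin, hcoeff]
  -- assembling everything
  obtain ⟨R, hR⟩ : ∃ R : ℝ → ℝ, R = fun t => 1 / (Real.pi ^ 2 * (h:ℝ) ^ 2) *
      (Real.sin (Real.pi * (h:ℝ) * Φ t) ^ 2 / ψ t ^ 2) := ⟨_, rfl⟩
  have hswap := MeasureTheory.integral_integral_swap hFint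
  calc (∫ x in (0:ℝ)..1, (θ x : ℂ) *
        Complex.exp (-2 * (Real.pi : ℂ) * Complex.I * (h : ℂ) * (x : ℂ)))
      = ∫ x in Ioc (0:ℝ) 1, (θ x : ℂ) *
        Complex.exp (-2 * (Real.pi : ℂ) * Complex.I * (h : ℂ) * (x : ℂ)) :=
        intervalIntegral.integral_of_le zero_le_one
    _ = ∫ x in Ioo (0:ℝ) 1, (θ x : ℂ) *
        Complex.exp (-2 * (Real.pi : ℂ) * Complex.I * (h : ℂ) * (x : ℂ)) :=
        (setIntegral_congr_set Ioo_ae_eq_Ioc).symm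
    _ = ∫ x in Ioo (0:ℝ) 1, ∫ t : ℝ, (Gfun Φ ψ x t : ℂ) *
        Complex.exp (-2 * (Real.pi : ℂ) * Complex.I * (h : ℂ) * (x : ℂ)) := by
        apply setIntegral_congr_fun measurableSet_Ioo
        intro x hx
        dsimp only
        rw [hθfull x hx, MeasureTheory.integral_mul_const]
        congr 1
        exact _root_.integral_ofReal.symm
    _ = ∫ x in Ioc (0:ℝ) 1, ∫ t : ℝ, (Gfun Φ ψ x t : ℂ) *
        Complex.exp (-2 * (Real.pi : ℂ) * Complex.I * (h : ℂ) * (x : ℂ)) :=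
        setIntegral_congr_set Ioo_ae_eq_Ioc
    _ = ∫ t : ℝ, ∫ x in Ioc (0:ℝ) 1, (Gfun Φ ψ x t : ℂ) *
        Complex.exp (-2 * (Real.pi : ℂ) * Complex.I * (h : ℂ) * (x : ℂ)) := hswap
    _ = ∫ t : ℝ, ((R t : ℝ) : ℂ) :=
        MeasureTheory.integral_congr_ae (Filter.Eventually.of_forall (fun t =>
          (inner t).trans (by simp only [hR])))
    _ = ((∫ t : ℝ, R t : ℝ) : ℂ) := _root_.integral_ofReal
    _ = (((∫ t : ℝ, 1 / (Real.pi ^ 2 * (h:ℝ) ^ 2) *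
        (Real.sin (Real.pi * (h:ℝ) * Φ t) ^ 2 / ψ t ^ 2)) : ℝ) : ℂ) := by rw [hR]
    _ = ((1 / (Real.pi ^ 2 * (h : ℝ) ^ 2) *
        ∫ t : ℝ, Real.sin (Real.pi * (h : ℝ) * Φ t) ^ 2 / ψ t ^ 2 : ℝ) : ℂ) := by
        rw [MeasureTheory.integral_const_mul]
end

section
/- Fix ν > 0. Let φ_ν(x) = c_ν (1 + x²/ν)^{−(ν+1)/2} with c_ν = Γ((ν+1)/2)/(√(νπ) Γ(ν/2)) be the density of the Student-t distribution with ν degrees of freedom, and let Φ_ν(x) = ∫_{-∞}^x φ_ν(t) dt be its cumulative distribution function. Let P_ν(x) = (1/2)(1−x)^{−ν} for x < 0 and P_ν(x) = 1 − (1/2)(1+x)^{−ν} for x ≥ 0, and set L_ν = (2c_ν/ν)(min(1,ν))^{(ν+1)/2} and U_ν = (2c_ν/ν)(1+ν)^{(ν+1)/2}. Then for every real x, L_ν · P_ν(x) ≤ Φ_ν(x) ≤ U_ν · P_ν(x). -/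
open MeasureTheory Set Filter Topology

lemma rpow_neg_two_mul {B e : ℝ} (hB : 0 < B) : B ^ (-(2 * e)) = (B ^ 2) ^ (-e) := by
  rw [← Real.rpow_natCast B 2, ← Real.rpow_mul hB.le]
  norm_num

lemma key_le {e A B C : ℝ} (he : 0 ≤ e) (hA : 0 < A) (hB : 0 < B) (hC : 0 < C)
    (h : C * A ≤ B ^ 2) : C ^ e * B ^ (-(2 * e)) ≤ A ^ (-e) := by
  have hB2 : (0:ℝ) < B ^ 2 := by positivity
  rw [rpow_neg_two_mul hB, Real.rpow_neg hB2.le, Real.rpow_neg hA.le, ← div_eq_mul_inv,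
    ← Real.div_rpow hC.le hB2.le, ← Real.inv_rpow hA.le]
  exact Real.rpow_le_rpow (by positivity) (by rw [inv_eq_one_div, div_le_div_iff₀ hB2 hA]; linarith) he

lemma key_ge {e A B C : ℝ} (he : 0 ≤ e) (hA : 0 < A) (hB : 0 < B) (hC : 0 < C)
    (h : B ^ 2 ≤ C * A) : A ^ (-e) ≤ C ^ e * B ^ (-(2 * e)) := by
  have hB2 : (0:ℝ) < B ^ 2 := by positivity
  rw [rpow_neg_two_mul hB, Real.rpow_neg hB2.le, Real.rpow_neg hA.le, ← div_eq_mul_inv,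
    ← Real.div_rpow hC.le hB2.le, ← Real.inv_rpow hA.le]
  exact Real.rpow_le_rpow (by positivity) (by rw [inv_eq_one_div, div_le_div_iff₀ hA hB2]; linarith) he

lemma rho_integrable (ν : ℝ) (hν : 0 < ν) :
    Integrable (fun t : ℝ => (ν/2) * (1+|t|) ^ (-(ν+1))) := by
  have h : Integrable (fun t : ℝ => (1 + ‖t‖) ^ (-(ν+1))) :=
    integrable_one_add_norm (by simp; linarith)
  simpa [Real.norm_eq_abs] using h.const_mul (ν/2)

lemma int_Iic_neg (ν : ℝ) (hν : 0 < ν) {x : ℝ} (hx : x ≤ 0) :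
    ∫ t in Iic x, (ν/2) * (1+|t|) ^ (-(ν+1)) = (1/2) * (1-x) ^ (-ν) := by
  have hcongr : EqOn (fun t : ℝ => (ν/2) * (1+|t|) ^ (-(ν+1)))
      (fun t : ℝ => (ν/2) * (1-t) ^ (-(ν+1))) (Iic x) := by
    intro t ht
    simp only
    rw [abs_of_nonpos (le_trans ht hx)]
    ring_nf
  rw [setIntegral_congr_fun measurableSet_Iic hcongr]
  have hint : IntegrableOn (fun t : ℝ => (ν/2) * (1-t) ^ (-(ν+1))) (Iic x) :=
    ((rho_integrable ν hν).integrableOn.congr_fun hcongr measurableSet_Iic)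
  have hderiv : ∀ t ∈ Iic x, HasDerivAt (fun t : ℝ => (1/2) * (1-t) ^ (-ν))
      ((ν/2) * (1-t) ^ (-(ν+1))) t := by
    intro t ht
    have h1 : HasDerivAt (fun t : ℝ => 1 - t) (-1) t := (hasDerivAt_id t).const_sub 1
    have h2 : (1:ℝ) - t ≠ 0 := by
      have : 0 < 1 - t := by have := le_trans ht hx; linarith
      linarith
    have h3 := (h1.rpow_const (p := -ν) (Or.inl h2)).const_mul (1/2 : ℝ)
    refine h3.congr_deriv ?_
    rw [show -ν - 1 = -(ν+1) by ring]
    ring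
  have htend : Tendsto (fun t : ℝ => (1/2) * (1-t) ^ (-ν)) atBot (𝓝 0) := by
    have h1 : Tendsto (fun t : ℝ => 1 - t) atBot atTop := by
      have : Tendsto (fun t : ℝ => -t) atBot atTop := tendsto_neg_atBot_atTop
      simpa [sub_eq_add_neg] using tendsto_atTop_add_const_left atBot 1 this
    have h2 := (tendsto_rpow_neg_atTop hν).comp h1
    simpa using h2.const_mul (1/2 : ℝ)
  have := integral_Iic_of_hasDerivAt_of_tendsto' hderiv hint htend
  rw [this]; ring

lemma int_Ioc_pos (ν : ℝ) (hν : 0 < ν) {x : ℝ} (hx : 0 ≤ x) :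
    ∫ t in Ioc 0 x, (ν/2) * (1+|t|) ^ (-(ν+1)) = (1/2) - (1/2) * (1+x) ^ (-ν) := by
  have hcongr : EqOn (fun t : ℝ => (ν/2) * (1+|t|) ^ (-(ν+1)))
      (fun t : ℝ => (ν/2) * (1+t) ^ (-(ν+1))) (Ioc 0 x) := by
    intro t ht
    simp only
    rw [abs_of_nonneg ht.1.le]
  rw [setIntegral_congr_fun measurableSet_Ioc hcongr,
    ← intervalIntegral.integral_of_le hx]
  have hderiv : ∀ t ∈ uIcc 0 x, HasDerivAt (fun t : ℝ => -(1/2) * (1+t) ^ (-ν))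
      ((ν/2) * (1+t) ^ (-(ν+1))) t := by
    intro t ht
    rw [uIcc_of_le hx] at ht
    have h1 : HasDerivAt (fun t : ℝ => 1 + t) 1 t := (hasDerivAt_id t).const_add 1
    have h2 : (1:ℝ) + t ≠ 0 := by have := ht.1; positivity
    have h3 := (h1.rpow_const (p := -ν) (Or.inl h2)).const_mul (-(1/2) : ℝ)
    refine h3.congr_deriv ?_
    rw [show -ν - 1 = -(ν+1) by ring]
    ring
  have hci : IntervalIntegrable (fun t : ℝ => (ν/2) * (1+t) ^ (-(ν+1))) volume 0 x := by
    apply ContinuousOn.intervalIntegrable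
    apply ContinuousOn.mul continuousOn_const
    apply ContinuousOn.rpow_const (by fun_prop)
    intro t ht
    rw [uIcc_of_le hx] at ht
    exact Or.inl (by have := ht.1; positivity)
  rw [intervalIntegral.integral_eq_sub_of_hasDerivAt hderiv hci]
  norm_num
  ring

/-- Two-sided comparison of the Student-t CDF with the rational CDF `P_ν`. -/
theorem stmt7 (ν : ℝ) (hν : 0 < ν)
    (cν : ℝ)
    (hc : cν = Real.Gamma ((ν + 1) / 2) / (Real.sqrt (ν * Real.pi) * Real.Gamma (ν / 2)))
    (φν : ℝ → ℝ)
    (hφ : ∀ x, φν x = cν * (1 + x ^ 2 / ν) ^ (-((ν + 1) / 2)))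
    (Φν : ℝ → ℝ) (hΦ : ∀ x, Φν x = ∫ t in Iic x, φν t)
    (Pν : ℝ → ℝ)
    (hP : ∀ x : ℝ, Pν x = if x < 0 then (1 / 2) * (1 - x) ^ (-ν)
      else 1 - (1 / 2) * (1 + x) ^ (-ν))
    (Lν Uν : ℝ)
    (hL : Lν = (2 * cν / ν) * (min 1 ν) ^ ((ν + 1) / 2))
    (hU : Uν = (2 * cν / ν) * (1 + ν) ^ ((ν + 1) / 2))
    (x : ℝ) :
    Lν * Pν x ≤ Φν x ∧ Φν x ≤ Uν * Pν x := by
  set ρ : ℝ → ℝ := fun t => (ν/2) * (1+|t|) ^ (-(ν+1)) with hρdef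
  set e : ℝ := (ν+1)/2 with hedef
  have he : 0 ≤ e := by rw [hedef]; linarith
  have h2e : 2 * e = ν + 1 := by rw [hedef]; ring
  have hcν : 0 < cν := by
    rw [hc]
    apply div_pos (Real.Gamma_pos_of_pos (by linarith))
    exact mul_pos (Real.sqrt_pos.mpr (mul_pos hν Real.pi_pos))
      (Real.Gamma_pos_of_pos (by linarith))
  have hm : 0 < min 1 ν := lt_min one_pos hν
  -- pointwise bounds
  have hBpos : ∀ t : ℝ, (0:ℝ) < 1 + |t| := fun t => by have := abs_nonneg t; linarith
  have hApos : ∀ t : ℝ, (0:ℝ) < 1 + t^2/ν := fun t => by positivity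
  have hub : ∀ t, φν t ≤ Uν * ρ t := by
    intro t
    have hB2 : (1 + |t|)^2 ≤ (1+ν) * (1 + t^2/ν) := by
      have key : 2 * |t| * ν ≤ t^2 + ν^2 := by nlinarith [sq_nonneg (|t| - ν), sq_abs t]
      have expand : (1+ν)*(1+t^2/ν) = 1 + ν + t^2/ν + t^2 := by field_simp; ring
      have key2 : 2 * |t| ≤ ν + t^2/ν := by
        rw [← sub_nonneg]
        have : ν + t^2/ν - 2 * |t| = (t^2 + ν^2 - 2 * |t| * ν)/ν := by field_simp; ring
        rw [this]
        apply div_nonneg (by linarith) hν.le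
      nlinarith [sq_abs t]
    have hkey := key_ge (A := 1 + t^2/ν) (B := 1 + |t|) (C := 1 + ν) he (hApos t)
      (hBpos t) (by linarith) hB2
    have hUρ : Uν * ρ t = cν * ((1+ν) ^ e * (1+|t|) ^ (-(2*e))) := by
      rw [hU, hρdef, h2e, hedef]
      field_simp
    rw [hφ, hUρ, show -((ν+1)/2) = -e from by rw [hedef]]
    exact mul_le_mul_of_nonneg_left hkey hcν.le
  have hlb : ∀ t, Lν * ρ t ≤ φν t := by
    intro t
    have hB2 : (min 1 ν) * (1 + t^2/ν) ≤ (1 + |t|)^2 := by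
      have h1 : (min 1 ν) * (t^2/ν) ≤ t^2 := by
        calc (min 1 ν) * (t^2/ν) ≤ ν * (t^2/ν) :=
              mul_le_mul_of_nonneg_right (min_le_right 1 ν) (by positivity)
          _ = t^2 := mul_div_cancel₀ _ hν.ne'
      nlinarith [min_le_left 1 ν, sq_abs t, abs_nonneg t]
    have hkey := key_le (A := 1 + t^2/ν) (B := 1 + |t|) (C := min 1 ν) he (hApos t)
      (hBpos t) hm hB2
    have hLρ : Lν * ρ t = cν * ((min 1 ν) ^ e * (1+|t|) ^ (-(2*e))) := by
      rw [hL, hρdef, h2e, hedef]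
      field_simp
    rw [hφ, hLρ, show -((ν+1)/2) = -e from by rw [hedef]]
    exact mul_le_mul_of_nonneg_left hkey hcν.le
  -- integrability
  have hρint : Integrable ρ := rho_integrable ν hν
  have hφcont : Continuous φν := by
    have : φν = fun t => cν * (1 + t ^ 2 / ν) ^ (-((ν + 1) / 2)) := funext hφ
    rw [this]
    exact continuous_const.mul (Continuous.rpow_const (by fun_prop)
      (fun t => Or.inl (ne_of_gt (hApos t))))
  have hφnonneg : ∀ t, 0 ≤ φν t := fun t => by rw [hφ]; positivity
  have hφint : IntegrableOn φν (Iic x) := by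
    apply Integrable.mono (hρint.const_mul Uν).integrableOn
      hφcont.aestronglyMeasurable.restrict
    filter_upwards with t
    rw [Real.norm_eq_abs, Real.norm_eq_abs, abs_of_nonneg (hφnonneg t)]
    exact le_trans (hub t) (le_abs_self _)
  -- P is the CDF of ρ
  have hPint : Pν x = ∫ t in Iic x, ρ t := by
    rw [hP]
    by_cases hx : x < 0
    · rw [if_pos hx, int_Iic_neg ν hν hx.le]
    · push_neg at hx
      rw [if_neg (not_lt.mpr hx), ← Iic_union_Ioc_eq_Iic hx,
        setIntegral_union (Iic_disjoint_Ioc le_rfl) measurableSet_Ioc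
          hρint.integrableOn hρint.integrableOn,
        int_Iic_neg ν hν le_rfl, int_Ioc_pos ν hν hx]
      norm_num
      ring
  constructor
  · calc Lν * Pν x = ∫ t in Iic x, Lν * ρ t := by
          rw [hPint]; exact (integral_const_mul Lν _).symm
      _ ≤ ∫ t in Iic x, φν t :=
          integral_mono ((hρint.const_mul Lν).integrableOn) hφint hlb
      _ = Φν x := (hΦ x).symm
  · calc Φν x = ∫ t in Iic x, φν t := hΦ x
      _ ≤ ∫ t in Iic x, Uν * ρ t :=
          integral_mono hφint ((hρint.const_mul Uν).integrableOn) hub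
      _ = Uν * Pν x := by rw [hPint]; exact integral_const_mul Uν _
end

section
/- Fix ν > 0. Let φ_ν(x) = c_ν (1 + x²/ν)^{−(ν+1)/2} with c_ν = Γ((ν+1)/2)/(√(νπ) Γ(ν/2)) be the density of the Student-t distribution with ν degrees of freedom, let Φ_ν be its cumulative distribution function and Φ_ν⁻¹ : (0,1) → ℝ its inverse. Let P_ν(x) = (1/2)(1−x)^{−ν} for x < 0 and P_ν(x) = 1 − (1/2)(1+x)^{−ν} for x ≥ 0, and set L_ν = (2c_ν/ν)(min(1,ν))^{(ν+1)/2} and U_ν = (2c_ν/ν)(1+ν)^{(ν+1)/2}. Then for every u ∈ (0,1), u/U_ν ≤ P_ν(Φ_ν⁻¹(u)) ≤ u/L_ν. -/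
open MeasureTheory Set

open Filter

lemma aux_hasDerivAt (ν : ℝ) (hν : 0 < ν) {Pν : ℝ → ℝ}
    (hP : ∀ x : ℝ, Pν x = if x < 0 then (1 / 2) * (1 - x) ^ (-ν)
      else 1 - (1 / 2) * (1 + x) ^ (-ν)) (t : ℝ) :
    HasDerivAt Pν (ν / 2 * (1 + |t|) ^ (-(ν + 1))) t := by
  have hg1 : ∀ s : ℝ, s < 1 →
      HasDerivAt (fun x : ℝ => (1/2) * (1 - x) ^ (-ν)) (ν/2 * (1 - s) ^ (-ν - 1)) s := by
    intro s hs
    have h0 : HasDerivAt (fun x : ℝ => 1 - x) (-1) s := (hasDerivAt_id s).const_sub 1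
    have h1 := h0.rpow_const (p := -ν) (Or.inl (by show (1:ℝ) - s ≠ 0; intro h; linarith [h]))
    have h2 := h1.const_mul ((1:ℝ)/2)
    exact h2.congr_deriv (by ring)
  have hg2 : ∀ s : ℝ, -1 < s →
      HasDerivAt (fun x : ℝ => 1 - (1/2) * (1 + x) ^ (-ν)) (ν/2 * (1 + s) ^ (-ν - 1)) s := by
    intro s hs
    have h0 : HasDerivAt (fun x : ℝ => 1 + x) 1 s := (hasDerivAt_id s).const_add 1
    have h1 := h0.rpow_const (p := -ν) (Or.inl (by show (1:ℝ) + s ≠ 0; intro h; linarith [h]))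
    have h2 := (h1.const_mul ((1:ℝ)/2)).const_sub 1
    exact h2.congr_deriv (by ring)
  have hPle : ∀ y : ℝ, y ≤ 0 → Pν y = (1/2) * (1 - y) ^ (-ν) := by
    intro y hy
    rcases hy.lt_or_eq with h|h
    · rw [hP y, if_pos h]
    · subst h
      rw [hP 0, if_neg (lt_irrefl 0)]
      norm_num [Real.one_rpow]
  have hPge : ∀ y : ℝ, 0 ≤ y → Pν y = 1 - (1/2) * (1 + y) ^ (-ν) := by
    intro y hy
    rw [hP y, if_neg (not_lt.mpr hy)]
  rcases lt_trichotomy t 0 with ht|rfl|ht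
  · have hd := hg1 t (by linarith)
    have he : Pν =ᶠ[nhds t] fun x : ℝ => (1/2) * (1 - x) ^ (-ν) := by
      filter_upwards [Iio_mem_nhds ht] with x hx
      exact hPle x hx.le
    have hres := hd.congr_of_eventuallyEq he
    have heq : ν/2 * (1 + |t|) ^ (-(ν + 1)) = ν/2 * (1 - t) ^ (-ν - 1) := by
      rw [abs_of_neg ht, show -(ν+1) = -ν-1 from by ring, show 1 + -t = 1 - t from by ring]
    rw [heq]; exact hres
  · have hA : HasDerivWithinAt Pν (ν/2 * ((1:ℝ) - 0) ^ (-ν - 1)) (Iic 0) 0 :=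
      ((hg1 0 one_pos).hasDerivWithinAt).congr (fun y hy => hPle y hy) (hPle 0 le_rfl)
    have hB : HasDerivWithinAt Pν (ν/2 * ((1:ℝ) - 0) ^ (-ν - 1)) (Ici 0) 0 := by
      have hres := ((hg2 0 (by norm_num)).hasDerivWithinAt).congr
        (fun y (hy : y ∈ Ici 0) => hPge y hy) (hPge 0 le_rfl)
      have heq : ν/2 * ((1:ℝ) - 0) ^ (-ν - 1) = ν/2 * ((1:ℝ) + 0) ^ (-ν - 1) := by norm_num
      rw [heq]; exact hres
    have hu := hA.union hB
    rw [Iic_union_Ici] at hu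
    have hres := hasDerivWithinAt_univ.mp hu
    have heq : ν/2 * (1 + |(0:ℝ)|) ^ (-(ν + 1)) = ν/2 * ((1:ℝ) - 0) ^ (-ν - 1) := by
      norm_num [Real.one_rpow]
    rw [heq]; exact hres
  · have hd := hg2 t (by linarith)
    have he : Pν =ᶠ[nhds t] fun x : ℝ => 1 - (1/2) * (1 + x) ^ (-ν) := by
      filter_upwards [Ioi_mem_nhds ht] with x hx
      exact hPge x hx.le
    have hres := hd.congr_of_eventuallyEq he
    have heq : ν/2 * (1 + |t|) ^ (-(ν + 1)) = ν/2 * (1 + t) ^ (-ν - 1) := by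
      rw [abs_of_pos ht, show -(ν+1) = -ν-1 from by ring]
    rw [heq]; exact hres

lemma aux_integrable (ν : ℝ) (hν : 0 < ν) :
    Integrable (fun t : ℝ => (1 + |t|) ^ (-(ν + 1))) := by
  have hcont : Continuous fun t : ℝ => (1 + |t|) ^ (-(ν + 1)) :=
    (continuous_const.add continuous_abs).rpow_const (fun x => Or.inl (by show (1:ℝ) + |x| ≠ 0; positivity))
  have hIoi : IntegrableOn (fun t : ℝ => (1 + |t|) ^ (-(ν + 1))) (Ioi 1) := by
    refine Integrable.mono' (g := fun t : ℝ => t ^ (-(ν + 1)))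
      (integrableOn_Ioi_rpow_of_lt (by linarith) one_pos)
      hcont.aestronglyMeasurable.restrict ?_
    filter_upwards [ae_restrict_mem measurableSet_Ioi] with t ht
    have ht1 : (1:ℝ) < t := ht
    rw [Real.norm_eq_abs, abs_of_nonneg (Real.rpow_nonneg (by positivity) _)]
    exact Real.rpow_le_rpow_of_nonpos (by linarith) (by cases abs_cases t <;> linarith)
      (by linarith)
  have hIcc : IntegrableOn (fun t : ℝ => (1 + |t|) ^ (-(ν + 1))) (Icc 0 1) :=
    hcont.integrableOn_Icc
  have hIci : IntegrableOn (fun t : ℝ => (1 + |t|) ^ (-(ν + 1))) (Ici 0) := by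
    rw [← Icc_union_Ioi_eq_Ici (zero_le_one)]
    exact hIcc.union hIoi
  have hIic : IntegrableOn (fun t : ℝ => (1 + |t|) ^ (-(ν + 1))) (Iic 0) := by
    rw [show (volume : Measure ℝ) = Measure.map Neg.neg volume from (Measure.map_neg_eq_self _).symm]
    have m : MeasurableEmbedding (Neg.neg : ℝ → ℝ) := (Homeomorph.neg ℝ).measurableEmbedding
    rw [m.integrableOn_map_iff]
    simp_rw [Function.comp_def, abs_neg, neg_preimage, neg_Iic, neg_zero]
    exact hIci
  rw [← integrableOn_univ, ← Iic_union_Ioi (a := (0:ℝ))]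
  exact hIic.union (hIci.mono_set Ioi_subset_Ici_self)

/-- Quantile sandwich: `u/U_ν ≤ P_ν(Φ_ν⁻¹(u)) ≤ u/L_ν` for `u ∈ (0,1)`. -/
theorem stmt8 (ν : ℝ) (hν : 0 < ν)
    (cν : ℝ)
    (hc : cν = Real.Gamma ((ν + 1) / 2) / (Real.sqrt (ν * Real.pi) * Real.Gamma (ν / 2)))
    (φν : ℝ → ℝ)
    (hφ : ∀ x, φν x = cν * (1 + x ^ 2 / ν) ^ (-((ν + 1) / 2)))
    (Φν : ℝ → ℝ) (hΦ : ∀ x, Φν x = ∫ t in Iic x, φν t)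
    (Φinv : ℝ → ℝ)
    (hinv1 : ∀ u ∈ Ioo (0:ℝ) 1, Φν (Φinv u) = u)
    (hinv2 : ∀ t : ℝ, Φinv (Φν t) = t)
    (Pν : ℝ → ℝ)
    (hP : ∀ x : ℝ, Pν x = if x < 0 then (1 / 2) * (1 - x) ^ (-ν)
      else 1 - (1 / 2) * (1 + x) ^ (-ν))
    (Lν Uν : ℝ)
    (hL : Lν = (2 * cν / ν) * (min 1 ν) ^ ((ν + 1) / 2))
    (hU : Uν = (2 * cν / ν) * (1 + ν) ^ ((ν + 1) / 2))
    (u : ℝ) (hu : u ∈ Ioo (0:ℝ) 1) :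
    u / Uν ≤ Pν (Φinv u) ∧ Pν (Φinv u) ≤ u / Lν := by

  have hc0 : 0 < cν := by
    rw [hc]
    exact div_pos (Real.Gamma_pos_of_pos (by linarith))
      (mul_pos (Real.sqrt_pos.mpr (mul_pos hν Real.pi_pos))
        (Real.Gamma_pos_of_pos (by linarith)))
  have hm : (0:ℝ) < min 1 ν := lt_min one_pos hν
  have hL0 : 0 < Lν := by
    rw [hL]; positivity
  have hU0 : 0 < Uν := by
    rw [hU]; positivity
  -- rewriting the power of `1 + |t|` as a power of its square
  have hsq : ∀ t : ℝ, (1 + |t|) ^ (-(ν + 1)) = ((1 + |t|) ^ 2) ^ (-((ν + 1) / 2)) := by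
    intro t
    have h0 : (0:ℝ) ≤ 1 + |t| := by positivity
    rw [← Real.rpow_natCast (1 + |t|) 2, ← Real.rpow_mul h0]
    congr 1
    push_cast
    ring
  -- pointwise upper bound
  have keyU : ∀ t : ℝ, φν t ≤ Uν * (ν / 2 * (1 + |t|) ^ (-(ν + 1))) := by
    intro t
    have ha2 : (0:ℝ) < (1 + |t|) ^ 2 := by positivity
    have hbpos : (0:ℝ) < 1 + t ^ 2 / ν := by positivity
    have hba : (1 + |t|) ^ 2 / (1 + ν) ≤ 1 + t ^ 2 / ν := by
      rw [div_le_iff₀ (by linarith)]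
      nlinarith [sq_nonneg (|t| - ν), sq_abs t, abs_nonneg t,
        div_mul_cancel₀ (t ^ 2) hν.ne']
    have h1 : (1 + t ^ 2 / ν) ^ (-((ν + 1) / 2)) ≤
        ((1 + |t|) ^ 2 / (1 + ν)) ^ (-((ν + 1) / 2)) :=
      Real.rpow_le_rpow_of_nonpos (by positivity) hba (by linarith)
    have h2 : ((1 + |t|) ^ 2 / (1 + ν)) ^ (-((ν + 1) / 2)) =
        (1 + ν) ^ ((ν + 1) / 2) * ((1 + |t|) ^ 2) ^ (-((ν + 1) / 2)) := by
      rw [Real.div_rpow ha2.le (by linarith : (0:ℝ) ≤ 1 + ν),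
        Real.rpow_neg (by linarith : (0:ℝ) ≤ 1 + ν), div_eq_mul_inv, inv_inv, mul_comm]
    calc φν t = cν * (1 + t ^ 2 / ν) ^ (-((ν + 1) / 2)) := hφ t
      _ ≤ cν * ((1 + ν) ^ ((ν + 1) / 2) * ((1 + |t|) ^ 2) ^ (-((ν + 1) / 2))) := by
          rw [← h2]; exact mul_le_mul_of_nonneg_left h1 hc0.le
      _ = Uν * (ν / 2 * (1 + |t|) ^ (-(ν + 1))) := by
          rw [hU, hsq t]; field_simp
  -- pointwise lower bound
  have keyL : ∀ t : ℝ, Lν * (ν / 2 * (1 + |t|) ^ (-(ν + 1))) ≤ φν t := by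
    intro t
    have ha2 : (0:ℝ) < (1 + |t|) ^ 2 := by positivity
    have hbpos : (0:ℝ) < 1 + t ^ 2 / ν := by positivity
    have hba : 1 + t ^ 2 / ν ≤ (1 + |t|) ^ 2 / min 1 ν := by
      rw [le_div_iff₀ hm]
      rcases le_total ν 1 with h | h
      · rw [min_eq_right h]
        nlinarith [sq_abs t, abs_nonneg t, div_mul_cancel₀ (t ^ 2) hν.ne']
      · rw [min_eq_left h]
        nlinarith [sq_abs t, abs_nonneg t, div_mul_cancel₀ (t ^ 2) hν.ne',
          div_nonneg (sq_nonneg t) hν.le]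
    have h1 : ((1 + |t|) ^ 2 / min 1 ν) ^ (-((ν + 1) / 2)) ≤
        (1 + t ^ 2 / ν) ^ (-((ν + 1) / 2)) :=
      Real.rpow_le_rpow_of_nonpos hbpos hba (by linarith)
    have h2 : ((1 + |t|) ^ 2 / min 1 ν) ^ (-((ν + 1) / 2)) =
        (min 1 ν) ^ ((ν + 1) / 2) * ((1 + |t|) ^ 2) ^ (-((ν + 1) / 2)) := by
      rw [Real.div_rpow ha2.le hm.le, Real.rpow_neg hm.le, div_eq_mul_inv, inv_inv, mul_comm]
    calc Lν * (ν / 2 * (1 + |t|) ^ (-(ν + 1)))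
        = cν * ((min 1 ν) ^ ((ν + 1) / 2) * ((1 + |t|) ^ 2) ^ (-((ν + 1) / 2))) := by
          rw [hL, hsq t]; field_simp
      _ ≤ cν * (1 + t ^ 2 / ν) ^ (-((ν + 1) / 2)) := by
          rw [← h2]; exact mul_le_mul_of_nonneg_left h1 hc0.le
      _ = φν t := (hφ t).symm
  -- limit of Pν at -∞
  have htend : Tendsto Pν atBot (nhds 0) := by
    have h2 : Tendsto (fun x : ℝ => 1 - x) atBot atTop := by
      have := tendsto_atTop_add_const_left atBot (1:ℝ) tendsto_neg_atBot_atTop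
      simpa [sub_eq_add_neg] using this
    have h3 := (tendsto_rpow_neg_atTop hν).comp h2
    have h4 := h3.const_mul ((1:ℝ)/2)
    rw [mul_zero] at h4
    refine Tendsto.congr' ?_ h4
    filter_upwards [Iio_mem_atBot 0] with x hx
    rw [hP x, if_pos (show x < 0 from hx)]
    rfl
  -- FTC
  have hint : Integrable (fun t : ℝ => ν / 2 * (1 + |t|) ^ (-(ν + 1))) :=
    (aux_integrable ν hν).const_mul _
  have hFTC : ∀ b : ℝ, (∫ t in Iic b, ν / 2 * (1 + |t|) ^ (-(ν + 1))) = Pν b := by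
    intro b
    have := integral_Iic_of_hasDerivAt_of_tendsto' (f := Pν)
      (f' := fun t => ν / 2 * (1 + |t|) ^ (-(ν + 1))) (a := b) (m := 0)
      (fun x _ => aux_hasDerivAt ν hν hP x) hint.integrableOn htend
    simpa using this
  set x := Φinv u with hx
  have hΦx : Φν x = u := hinv1 u hu
  -- integrability of φν on Iic x
  have hφmeas : Continuous φν := by
    have : φν = fun t => cν * (1 + t ^ 2 / ν) ^ (-((ν + 1) / 2)) := funext hφ
    rw [this]
    exact continuous_const.mul ((continuous_const.add ((continuous_pow 2).div_const ν)).rpow_const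
      (fun t => Or.inl (ne_of_gt (by show (0:ℝ) < 1 + t ^ 2 / ν; have := div_nonneg (sq_nonneg t) hν.le; linarith))))
  have hφnn : ∀ t, 0 ≤ φν t := by
    intro t
    rw [hφ t]
    positivity
  have intφ : IntegrableOn φν (Iic x) := by
    refine Integrable.mono' ((hint.const_mul Uν).integrableOn)
      hφmeas.aestronglyMeasurable.restrict ?_
    filter_upwards with t
    rw [Real.norm_eq_abs, abs_of_nonneg (hφnn t)]
    exact keyU t
  have low : Lν * Pν x ≤ u := by
    have h1 : (∫ t in Iic x, Lν * (ν / 2 * (1 + |t|) ^ (-(ν + 1)))) ≤ ∫ t in Iic x, φν t :=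
      integral_mono ((hint.const_mul Lν).integrableOn) intφ (fun t => keyL t)
    rw [integral_const_mul, hFTC x] at h1
    rwa [← hΦ, hΦx] at h1
  have high : u ≤ Uν * Pν x := by
    have h1 : (∫ t in Iic x, φν t) ≤ ∫ t in Iic x, Uν * (ν / 2 * (1 + |t|) ^ (-(ν + 1))) :=
      integral_mono intφ ((hint.const_mul Uν).integrableOn) (fun t => keyU t)
    rw [integral_const_mul, hFTC x] at h1
    rwa [← hΦ, hΦx] at h1
  constructor
  · rw [div_le_iff₀ hU0, mul_comm]; exact high
  · rw [le_div_iff₀ hL0, mul_comm]; exact low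
end

section
/- Fix ν > 0 and λ > 0. Let φ_ν(x) = c_ν (1 + x²/ν)^{−(ν+1)/2} with c_ν = Γ((ν+1)/2)/(√(νπ) Γ(ν/2)) be the density of the Student-t distribution with ν degrees of freedom, let Φ_ν be its cumulative distribution function and Φ_ν⁻¹ : (0,1) → ℝ its inverse, and let ψ(x) = (1 + |x|)^{−λ}. Set L_ν = (2c_ν/ν)(min(1,ν))^{(ν+1)/2} and U_ν = (2c_ν/ν)(1+ν)^{(ν+1)/2}. Then for every t with 0 < t ≤ 1/2, ψ(Φ_ν⁻¹(t))² · φ_ν(Φ_ν⁻¹(t)) ≥ (ν L_ν / 2) · (2t/U_ν)^{1 + (2λ+1)/ν}. -/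
open MeasureTheory Set


lemma img_sub {x : ℝ} : (fun y : ℝ => 1 - y) '' Iic x = Ici (1 - x) := by
  ext u
  constructor
  · rintro ⟨y, hy, rfl⟩
    simp only [mem_Iic] at hy
    simp only [mem_Ici]
    linarith
  · intro hu
    simp only [mem_Ici] at hu
    exact ⟨1 - u, by simp only [mem_Iic]; linarith, by ring⟩

lemma hderiv_sub {x : ℝ} : ∀ y ∈ Iic x, HasDerivWithinAt (fun y : ℝ => 1 - y) (-1) (Iic x) y :=
  fun y _ => ((hasDerivAt_id y).const_sub 1).hasDerivWithinAt

lemma inj_sub {x : ℝ} : InjOn (fun y : ℝ => 1 - y) (Iic x) := by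
  intro a _ b _ h
  simp only at h; linarith

lemma intIic (ν : ℝ) (hν : 0 < ν) {x : ℝ} (hx : x ≤ 0) :
    ∫ y in Iic x, (1 - y) ^ (-(ν+1)) = (1 - x) ^ (-ν) / ν := by
  have h := integral_image_eq_integral_abs_deriv_smul (s := Iic x) (f' := fun _ => (-1:ℝ))
    measurableSet_Iic (hderiv_sub (x := x)) (inj_sub (x := x)) (fun u : ℝ => u ^ (-(ν+1)))
  rw [img_sub] at h
  simp only [abs_neg, abs_one, one_smul] at h
  rw [← h, integral_Ici_eq_integral_Ioi,
    integral_Ioi_rpow_of_lt (by linarith) (by linarith)]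
  rw [show -(ν+1)+1 = -ν by ring]
  field_simp

lemma intbleIic (ν : ℝ) (hν : 0 < ν) {x : ℝ} (hx : x ≤ 0) :
    IntegrableOn (fun y : ℝ => (1 - y) ^ (-(ν+1))) (Iic x) := by
  have h := integrableOn_image_iff_integrableOn_abs_deriv_smul (s := Iic x) (f' := fun _ => (-1:ℝ))
    measurableSet_Iic (hderiv_sub (x := x)) (inj_sub (x := x)) (fun u : ℝ => u ^ (-(ν+1)))
  rw [img_sub] at h
  simp only [abs_neg, abs_one, one_smul] at h
  rw [← h, integrableOn_Ici_iff_integrableOn_Ioi]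
  exact integrableOn_Ioi_rpow_of_lt (by linarith) (by linarith)


lemma intbleIoi (ν : ℝ) (hν : 0 < ν) :
    IntegrableOn (fun y : ℝ => (1 + y) ^ (-(ν+1))) (Ioi (0:ℝ)) := by
  have himg : (fun y : ℝ => 1 + y) '' Ioi 0 = Ioi (1:ℝ) := by
    ext u
    constructor
    · rintro ⟨y, hy, rfl⟩
      simp only [mem_Ioi] at hy ⊢; linarith
    · intro hu
      simp only [mem_Ioi] at hu
      exact ⟨u - 1, by simp only [mem_Ioi]; linarith, by ring⟩
  have h := integrableOn_image_iff_integrableOn_abs_deriv_smul (s := Ioi (0:ℝ))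
    (f := fun y : ℝ => 1 + y) (f' := fun _ => (1:ℝ)) measurableSet_Ioi
    (fun y _ => ((hasDerivAt_id y).const_add 1).hasDerivWithinAt)
    (fun a _ b _ hab => by simpa using hab) (fun u : ℝ => u ^ (-(ν+1)))
  rw [himg] at h
  simp only [abs_one, one_smul] at h
  rw [← h]
  exact integrableOn_Ioi_rpow_of_lt (by linarith) one_pos

/-- global integrability of the rational density shape -/
lemma rho_intble (ν : ℝ) (hν : 0 < ν) :
    Integrable (fun y : ℝ => (1 + |y|) ^ (-(ν+1))) := by
  rw [← integrableOn_univ, ← Set.Iic_union_Ioi (a := (0:ℝ)), integrableOn_union]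
  constructor
  · exact (intbleIic ν hν le_rfl).congr_fun
      (fun y hy => by rw [abs_of_nonpos hy]; ring_nf) measurableSet_Iic
  · exact (intbleIoi ν hν).congr_fun
      (fun y hy => by rw [abs_of_pos hy]) measurableSet_Ioi

/-- pointwise lower bound -/
lemma pt_lower (ν : ℝ) (hν : 0 < ν) (y : ℝ) :
    (min 1 ν) ^ ((ν+1)/2) * (1 + |y|) ^ (-(ν+1)) ≤ (1 + y ^ 2 / ν) ^ (-((ν+1)/2)) := by
  have h1 : (0:ℝ) < 1 + |y| := by positivity
  have h2 : (0:ℝ) < 1 + y^2/ν := by positivity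
  have hm : (0:ℝ) < min 1 ν := lt_min one_pos hν
  have key : min 1 ν * (1 + y^2/ν) ≤ (1 + |y|)^2 := by
    have h3 : min 1 ν ≤ 1 := min_le_left _ _
    have h4 : min 1 ν ≤ ν := min_le_right _ _
    have h5 : min 1 ν * (y^2/ν) ≤ y^2 := by
      rw [div_eq_mul_inv, ← mul_assoc]
      have : min 1 ν * y^2 * ν⁻¹ ≤ ν * y^2 * ν⁻¹ := by
        apply mul_le_mul_of_nonneg_right _ (by positivity)
        exact mul_le_mul_of_nonneg_right h4 (by positivity)
      calc min 1 ν * y^2 * ν⁻¹ ≤ ν * y^2 * ν⁻¹ := this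
        _ = y^2 := by field_simp
    have h6 : (0:ℝ) ≤ |y| := abs_nonneg y
    have h7 : y^2 = |y|^2 := (sq_abs y).symm
    nlinarith
  have e1 : (1 + |y|) ^ (-(ν+1)) = ((1 + |y|)^2 : ℝ) ^ (-((ν+1)/2)) := by
    rw [← Real.rpow_natCast (1 + |y|) 2, ← Real.rpow_mul h1.le]
    congr 1
    push_cast
    ring
  have e2 : (min 1 ν) ^ ((ν+1)/2) * ((1 + |y|)^2 : ℝ) ^ (-((ν+1)/2))
      = ((1 + |y|)^2 / min 1 ν : ℝ) ^ (-((ν+1)/2)) := by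
    rw [Real.div_rpow (by positivity) hm.le, Real.rpow_neg hm.le,
      div_inv_eq_mul, mul_comm]
  rw [e1, e2]
  apply Real.rpow_le_rpow_of_nonpos h2 _ (by simp; positivity)
  rw [le_div_iff₀ hm]
  linarith [key]

/-- pointwise upper bound -/
lemma pt_upper (ν : ℝ) (hν : 0 < ν) (y : ℝ) :
    (1 + y ^ 2 / ν) ^ (-((ν+1)/2)) ≤ (1 + ν) ^ ((ν+1)/2) * (1 + |y|) ^ (-(ν+1)) := by
  have h1 : (0:ℝ) < 1 + |y| := by positivity
  have h2 : (0:ℝ) < 1 + y^2/ν := by positivity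
  have hm : (0:ℝ) < 1 + ν := by linarith
  have key : (1 + |y|)^2 ≤ (1 + ν) * (1 + y^2/ν) := by
    have amgm : 2 * |y| ≤ ν + y^2/ν := by
      have h0 : 0 ≤ (ν - |y|)^2 := sq_nonneg _
      have h7 : y^2 = |y|^2 := (sq_abs y).symm
      rw [← sub_nonneg]
      have : ν + y^2/ν - 2*|y| = (ν - |y|)^2 / ν := by
        field_simp
        nlinarith
      rw [this]; positivity
    have hy2 : (0:ℝ) ≤ y^2/ν := by positivity
    have e : (1+ν)*(1+y^2/ν) = 1 + (ν + y^2/ν) + ν*(y^2/ν) := by ring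
    have e2 : ν*(y^2/ν) = y^2 := by field_simp
    have e3 : (1+|y|)^2 = 1 + 2*|y| + |y|^2 := by ring
    rw [e, e2, e3, sq_abs]
    linarith
  have e1 : (1 + |y|) ^ (-(ν+1)) = ((1 + |y|)^2 : ℝ) ^ (-((ν+1)/2)) := by
    rw [← Real.rpow_natCast (1 + |y|) 2, ← Real.rpow_mul h1.le]
    congr 1
    push_cast
    ring
  have e2 : (1 + ν) ^ ((ν+1)/2) * ((1 + |y|)^2 : ℝ) ^ (-((ν+1)/2))
      = ((1 + |y|)^2 / (1 + ν) : ℝ) ^ (-((ν+1)/2)) := by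
    rw [Real.div_rpow (by positivity) hm.le, Real.rpow_neg hm.le,
      div_inv_eq_mul, mul_comm]
  rw [e1, e2]
  apply Real.rpow_le_rpow_of_nonpos (by positivity) _ (by simp; positivity)
  rw [div_le_iff₀ hm]
  linarith [key]

lemma phi_cont (ν : ℝ) (hν : 0 < ν) :
    Continuous (fun y : ℝ => (1 + y ^ 2 / ν) ^ (-((ν+1)/2))) := by
  apply Continuous.rpow_const (by continuity)
  intro y
  left
  positivity

lemma phi_intble (ν : ℝ) (hν : 0 < ν) :
    Integrable (fun y : ℝ => (1 + y ^ 2 / ν) ^ (-((ν+1)/2))) := by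
  apply Integrable.mono' (((rho_intble ν hν).const_mul ((1 + ν) ^ ((ν+1)/2))))
    (phi_cont ν hν).aestronglyMeasurable
  refine ae_of_all _ fun y => ?_
  rw [Real.norm_eq_abs, abs_of_nonneg (Real.rpow_nonneg (by positivity) _)]
  exact pt_upper ν hν y

lemma normD (ν : ℝ) (hν : 0 < ν) :
    Real.Gamma ((ν+1)/2) * ∫ x : ℝ, (1 + x ^ 2 / ν) ^ (-((ν+1)/2))
      = Real.sqrt (ν * Real.pi) * Real.Gamma (ν/2) := by
  have hs : 0 < (ν+1)/2 := by linarith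
  set F : ℝ → ℝ → ℝ := fun x t => t ^ ((ν+1)/2 - 1) * Real.exp (-((1 + x^2/ν) * t)) with hF
  have hr : ∀ x : ℝ, (0:ℝ) < 1 + x^2/ν := fun x => by positivity
  have step1 : ∀ x : ℝ, ∫ t in Ioi (0:ℝ), F x t
      = Real.Gamma ((ν+1)/2) * (1 + x^2/ν) ^ (-((ν+1)/2)) := by
    intro x
    show (∫ t in Ioi (0:ℝ), t ^ ((ν+1)/2 - 1) * Real.exp (-((1 + x^2/ν) * t))) = _
    rw [Real.integral_rpow_mul_exp_neg_mul_Ioi hs (hr x), one_div,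
      Real.inv_rpow (hr x).le, ← Real.rpow_neg (hr x).le, mul_comm]
  have sec_int : ∀ x : ℝ, IntegrableOn (fun t => F x t) (Ioi (0:ℝ)) := by
    intro x
    apply Integrable.mono' (Real.GammaIntegral_convergent hs)
    · apply (ContinuousOn.aestronglyMeasurable _ measurableSet_Ioi)
      apply ContinuousOn.mul
      · exact ContinuousOn.rpow_const (continuousOn_id) fun t ht => Or.inl (ne_of_gt ht)
      · exact (Continuous.continuousOn (by continuity))
    · filter_upwards [ae_restrict_mem measurableSet_Ioi] with t ht
      rw [mem_Ioi] at ht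
      rw [Real.norm_eq_abs,
        abs_of_nonneg (mul_nonneg (Real.rpow_nonneg ht.le _) (Real.exp_pos _).le)]
      rw [mul_comm (Real.exp _)]
      apply mul_le_mul_of_nonneg_left _ (Real.rpow_nonneg ht.le _)
      apply Real.exp_le_exp.2
      have hd : (0:ℝ) ≤ x^2/ν := div_nonneg (sq_nonneg x) hν.le
      have h1x : 1 ≤ 1 + x^2/ν := by linarith
      have : t ≤ (1 + x^2/ν) * t := le_mul_of_one_le_left ht.le h1x
      linarith
  have sec_norm : ∀ x : ℝ, ∫ t in Ioi (0:ℝ), ‖F x t‖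
      = Real.Gamma ((ν+1)/2) * (1 + x^2/ν) ^ (-((ν+1)/2)) := by
    intro x
    rw [← step1 x]
    apply integral_congr_ae
    filter_upwards [ae_restrict_mem measurableSet_Ioi] with t ht
    rw [mem_Ioi] at ht
    rw [Real.norm_eq_abs,
      abs_of_nonneg (mul_nonneg (Real.rpow_nonneg ht.le _) (Real.exp_pos _).le)]
  have hFmeas : AEStronglyMeasurable (Function.uncurry F)
      ((volume : Measure ℝ).prod ((volume : Measure ℝ).restrict (Ioi 0))) := by
    rw [show ((volume : Measure ℝ).prod ((volume : Measure ℝ).restrict (Ioi 0)))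
        = ((volume : Measure ℝ).prod (volume : Measure ℝ)).restrict (univ ×ˢ Ioi 0) by
      rw [← Measure.prod_restrict, Measure.restrict_univ]]
    apply ContinuousOn.aestronglyMeasurable _ (MeasurableSet.univ.prod measurableSet_Ioi)
    apply ContinuousOn.mul
    · exact ContinuousOn.rpow_const (continuous_snd.continuousOn)
        (fun p hp => Or.inl (ne_of_gt (mem_prod.1 hp).2))
    · exact Continuous.continuousOn (by continuity)
  have hFint : Integrable (Function.uncurry F)
      ((volume : Measure ℝ).prod ((volume : Measure ℝ).restrict (Ioi 0))) := by
    rw [MeasureTheory.integrable_prod_iff hFmeas]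
    constructor
    · exact ae_of_all _ sec_int
    · have h2 : (fun x => ∫ t in Ioi (0:ℝ), ‖F x t‖)
          = fun x => Real.Gamma ((ν+1)/2) * (1 + x^2/ν) ^ (-((ν+1)/2)) :=
        funext sec_norm
      simp only [Function.uncurry_apply_pair]
      rw [h2]
      exact (phi_intble ν hν).const_mul _
  have swap := MeasureTheory.integral_integral_swap hFint
  have lhs_eq : ∫ x : ℝ, ∫ t in Ioi (0:ℝ), F x t
      = Real.Gamma ((ν+1)/2) * ∫ x : ℝ, (1 + x ^ 2 / ν) ^ (-((ν+1)/2)) := by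
    simp_rw [step1]
    rw [MeasureTheory.integral_const_mul]
  have inner_eq : ∀ t ∈ Ioi (0:ℝ), (∫ x : ℝ, F x t)
      = Real.sqrt (ν * Real.pi) * (t ^ (ν/2 - 1) * Real.exp (-(1 * t))) := by
    intro t ht
    rw [mem_Ioi] at ht
    have e1 : ∀ x : ℝ, F x t = (t ^ ((ν+1)/2 - 1) * Real.exp (-t)) * Real.exp (-(t/ν) * x^2) := by
      intro x
      show t ^ ((ν+1)/2 - 1) * Real.exp (-((1 + x^2/ν) * t)) = _
      have : -((1 + x^2/ν) * t) = (-t) + (-(t/ν) * x^2) := by field_simp; ring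
      rw [this, Real.exp_add]
      ring
    simp_rw [e1]
    rw [MeasureTheory.integral_const_mul, integral_gaussian (t/ν)]
    have h1 : Real.pi / (t/ν) = (ν * Real.pi) / t := by
      rw [div_div_eq_mul_div]; ring
    have h2 : Real.sqrt ((ν * Real.pi) / t) = Real.sqrt (ν * Real.pi) * t ^ (-(1/2) : ℝ) := by
      rw [Real.sqrt_div (by positivity) t, div_eq_mul_inv]
      congr 1
      rw [Real.rpow_neg ht.le]
      congr 1
      exact Real.sqrt_eq_rpow t
    rw [h1, h2]
    have h3 : t ^ ((ν+1)/2 - 1) * Real.exp (-t) * (Real.sqrt (ν * Real.pi) * t ^ (-(1/2) : ℝ))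
        = Real.sqrt (ν * Real.pi) * (t ^ ((ν+1)/2 - 1) * t ^ (-(1/2) : ℝ) * Real.exp (-t)) := by
      ring
    rw [h3, ← Real.rpow_add ht,
      show (ν+1)/2 - 1 + (-(1/2) : ℝ) = ν/2 - 1 by ring, one_mul]
  rw [← lhs_eq, swap, setIntegral_congr_fun measurableSet_Ioi inner_eq,
    MeasureTheory.integral_const_mul,
    Real.integral_rpow_mul_exp_neg_mul_Ioi (by linarith : (0:ℝ) < ν/2) one_pos]
  simp [Real.one_rpow]

lemma phi_total (ν : ℝ) (hν : 0 < ν) :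
    ∫ x : ℝ, (Real.Gamma ((ν + 1) / 2) / (Real.sqrt (ν * Real.pi) * Real.Gamma (ν / 2)))
      * (1 + x ^ 2 / ν) ^ (-((ν + 1) / 2)) = 1 := by
  rw [MeasureTheory.integral_const_mul]
  have hg1 : 0 < Real.Gamma ((ν+1)/2) := Real.Gamma_pos_of_pos (by linarith)
  have hg2 : 0 < Real.Gamma (ν/2) := Real.Gamma_pos_of_pos (by linarith)
  have hπ := Real.pi_pos
  have hsq : 0 < Real.sqrt (ν * Real.pi) := Real.sqrt_pos.2 (by positivity)
  have h := normD ν hν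
  rw [div_mul_eq_mul_div, div_eq_one_iff_eq (by positivity)]
  linarith [h]

/-- Lower bound on `ψ(Φ_ν⁻¹(t))² φ_ν(Φ_ν⁻¹(t))` for the rational weight function
`ψ(x) = (1+|x|)^{−λ}` and the Student-t density. -/
theorem stmt9 (ν lam : ℝ) (hν : 0 < ν) (hlam : 0 < lam)
    (cν : ℝ)
    (hc : cν = Real.Gamma ((ν + 1) / 2) / (Real.sqrt (ν * Real.pi) * Real.Gamma (ν / 2)))
    (φν : ℝ → ℝ)
    (hφ : ∀ x, φν x = cν * (1 + x ^ 2 / ν) ^ (-((ν + 1) / 2)))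
    (Φν : ℝ → ℝ) (hΦ : ∀ x, Φν x = ∫ t in Iic x, φν t)
    (Φinv : ℝ → ℝ)
    (hinv1 : ∀ u ∈ Ioo (0:ℝ) 1, Φν (Φinv u) = u)
    (hinv2 : ∀ t : ℝ, Φinv (Φν t) = t)
    (ψ : ℝ → ℝ) (hψ : ∀ x, ψ x = (1 + |x|) ^ (-lam))
    (Lν Uν : ℝ)
    (hL : Lν = (2 * cν / ν) * (min 1 ν) ^ ((ν + 1) / 2))
    (hU : Uν = (2 * cν / ν) * (1 + ν) ^ ((ν + 1) / 2))
    (t : ℝ) (ht0 : 0 < t) (ht1 : t ≤ 1 / 2) :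
    (ν * Lν / 2) * (2 * t / Uν) ^ (1 + (2 * lam + 1) / ν) ≤
      ψ (Φinv t) ^ 2 * φν (Φinv t) := by
  have hs : 0 < (ν + 1) / 2 := by linarith
  have hπ := Real.pi_pos
  have hg1 : 0 < Real.Gamma ((ν+1)/2) := Real.Gamma_pos_of_pos (by linarith)
  have hg2 : 0 < Real.Gamma (ν/2) := Real.Gamma_pos_of_pos (by linarith)
  have hsq : 0 < Real.sqrt (ν * Real.pi) := Real.sqrt_pos.2 (by positivity)
  have hcpos : 0 < cν := by rw [hc]; positivity
  have hminpos : (0:ℝ) < min 1 ν := lt_min one_pos hν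
  have hUpos : 0 < Uν := by
    rw [hU]
    have : (0:ℝ) < (1 + ν) ^ ((ν+1)/2) := Real.rpow_pos_of_pos (by linarith) _
    positivity
  have hLpos : 0 < Lν := by
    rw [hL]
    have : (0:ℝ) < (min 1 ν) ^ ((ν+1)/2) := Real.rpow_pos_of_pos hminpos _
    positivity
  have hfe : φν = fun x => cν * (1 + x ^ 2 / ν) ^ (-((ν + 1) / 2)) := funext hφ
  have hfint : Integrable φν := by
    rw [hfe]
    exact (phi_intble ν hν).const_mul cν
  have htotal : ∫ x : ℝ, φν x = 1 := by
    rw [hfe, hc]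
    exact phi_total ν hν
  have hhalf : ∫ y in Iic (0:ℝ), φν y = 1 / 2 := by
    have h := integral_comp_neg_Ioi 0 φν
    simp only [neg_zero] at h
    have hsym : ∫ y in Iic (0:ℝ), φν y = ∫ y in Ioi (0:ℝ), φν y := by
      rw [← h]
      apply setIntegral_congr_fun measurableSet_Ioi
      intro y _
      simp only [hφ, neg_sq]
    have hsplit := intervalIntegral.integral_Iic_add_Ioi (b := (0:ℝ)) (f := φν) (μ := volume)
      hfint.integrableOn hfint.integrableOn
    rw [htotal] at hsplit
    linarith
  have hxmem : t ∈ Ioo (0:ℝ) 1 := ⟨ht0, by linarith⟩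
  have hΦx : Φν (Φinv t) = t := hinv1 t hxmem
  set x := Φinv t with hxdef
  rw [hΦ] at hΦx
  have hx0 : x ≤ 0 := by
    by_contra hpos
    push_neg at hpos
    have hsplit2 : ∫ y in Iic x, φν y = (∫ y in Iic (0:ℝ), φν y) + ∫ y in Ioc 0 x, φν y := by
      rw [← Set.Iic_union_Ioc_eq_Iic hpos.le]
      exact setIntegral_union (Set.Iic_disjoint_Ioc le_rfl) measurableSet_Ioc
        hfint.integrableOn hfint.integrableOn
    have hb : ∀ y ∈ Ioc (0:ℝ) x, cν * (1 + x ^ 2 / ν) ^ (-((ν+1)/2)) ≤ φν y := by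
      intro y hy
      rw [hφ]
      apply mul_le_mul_of_nonneg_left _ hcpos.le
      apply Real.rpow_le_rpow_of_nonpos (by positivity) _ (by linarith)
      have h1 : y ^ 2 ≤ x ^ 2 := by nlinarith [hy.1, hy.2]
      have h2 : y ^ 2 / ν ≤ x ^ 2 / ν := (div_le_div_iff_of_pos_right hν).2 h1
      linarith
    have hlow := setIntegral_ge_of_const_le_real measurableSet_Ioc
      (measure_Ioc_lt_top).ne hb hfint.integrableOn
    rw [Real.volume_real_Ioc_of_le (by linarith)] at hlow
    have hc0 : 0 < cν * (1 + x ^ 2 / ν) ^ (-((ν+1)/2)) * (x - 0) := by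
      have : (0:ℝ) < (1 + x ^ 2 / ν) ^ (-((ν+1)/2)) := Real.rpow_pos_of_pos (by positivity) _
      have hx' : 0 < x - 0 := by linarith
      positivity
    linarith
  have habs : 1 + |x| = 1 - x := by rw [abs_of_nonpos hx0]; ring
  have hup : t ≤ Uν / 2 * (1 - x) ^ (-ν) := by
    have hmono : ∫ y in Iic x, φν y
        ≤ ∫ y in Iic x, (cν * (1 + ν) ^ ((ν+1)/2)) * (1 - y) ^ (-(ν+1)) := by
      apply setIntegral_mono_on hfint.integrableOn
        ((intbleIic ν hν hx0).const_mul _) measurableSet_Iic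
      intro y hy
      rw [hφ]
      have h1 := pt_upper ν hν y
      have h2 : 1 + |y| = 1 - y := by
        rw [abs_of_nonpos (le_trans hy hx0)]; ring
      rw [h2] at h1
      calc cν * (1 + y ^ 2 / ν) ^ (-((ν+1)/2))
          ≤ cν * ((1 + ν) ^ ((ν+1)/2) * (1 - y) ^ (-(ν+1))) :=
            mul_le_mul_of_nonneg_left h1 hcpos.le
        _ = (cν * (1 + ν) ^ ((ν+1)/2)) * (1 - y) ^ (-(ν+1)) := by ring
    rw [MeasureTheory.integral_const_mul, intIic ν hν hx0] at hmono
    have hKeq : Uν / 2 * (1 - x) ^ (-ν)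
        = cν * (1 + ν) ^ ((ν+1)/2) * ((1 - x) ^ (-ν) / ν) := by
      rw [hU]; field_simp
    rw [hKeq]
    linarith
  have hqle : 2 * t / Uν ≤ (1 - x) ^ (-ν) := by
    rw [div_le_iff₀ hUpos]
    nlinarith [hup]
  have hqpos : 0 < 2 * t / Uν := by positivity
  have h1xpos : (0:ℝ) < 1 - x := by linarith
  have epos : (0:ℝ) ≤ 1 + (2 * lam + 1) / ν := by positivity
  have hkey : (2 * t / Uν) ^ (1 + (2 * lam + 1) / ν) ≤ (1 - x) ^ (-(2 * lam + ν + 1)) := by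
    have h1 : (2 * t / Uν) ^ (1 + (2 * lam + 1) / ν)
        ≤ ((1 - x) ^ (-ν)) ^ (1 + (2 * lam + 1) / ν) :=
      Real.rpow_le_rpow hqpos.le hqle epos
    rw [← Real.rpow_mul h1xpos.le] at h1
    rw [show -ν * (1 + (2 * lam + 1) / ν) = -(2 * lam + ν + 1) by field_simp; ring] at h1
    exact h1
  have hpsi : ψ x ^ 2 = (1 - x) ^ (-(2 * lam)) := by
    rw [hψ, habs, ← Real.rpow_natCast ((1 - x) ^ (-lam)) 2, ← Real.rpow_mul h1xpos.le]
    congr 1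
    push_cast
    ring
  have hphix : (ν * Lν / 2) * (1 - x) ^ (-(ν + 1)) ≤ φν x := by
    rw [hφ]
    have h1 := pt_lower ν hν x
    rw [habs] at h1
    have h2 := mul_le_mul_of_nonneg_left h1 hcpos.le
    have hLeq : ν * Lν / 2 = cν * (min 1 ν) ^ ((ν+1)/2) := by
      rw [hL]; field_simp
    calc (ν * Lν / 2) * (1 - x) ^ (-(ν + 1))
        = cν * ((min 1 ν) ^ ((ν+1)/2) * (1 - x) ^ (-(ν + 1))) := by rw [hLeq]; ring
      _ ≤ cν * (1 + x ^ 2 / ν) ^ (-((ν + 1) / 2)) := h2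
  calc (ν * Lν / 2) * (2 * t / Uν) ^ (1 + (2 * lam + 1) / ν)
      ≤ (ν * Lν / 2) * (1 - x) ^ (-(2 * lam + ν + 1)) :=
        mul_le_mul_of_nonneg_left hkey (by positivity)
    _ = (1 - x) ^ (-(2 * lam)) * ((ν * Lν / 2) * (1 - x) ^ (-(ν + 1))) := by
        rw [show -(2 * lam + ν + 1) = -(2 * lam) + (-(ν + 1)) by ring,
          Real.rpow_add h1xpos]
        ring
    _ ≤ ψ x ^ 2 * φν x := by
        rw [hpsi]
        exact mul_le_mul_of_nonneg_left hphix (Real.rpow_nonneg h1xpos.le _)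
end
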